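/- arXiv:2511.00809 — 12 statements merged into one kernel-verified Lean document; each statement's English description precedes it below -/
import Mathlib

section
/- Let F be a finite field, X a finite-dimensional F-vector space, and f, g : X → F^Ω two F-linear maps. If f and g are locally ω-equivalent (i.e., wt(f(θ)) = wt(g(θ)) for all θ ∈ X), then Wt(f[B]) = Wt(g[B]) for every F-subspace B ≤ X. -/
open scoped Classical
open Finset

/-- ω-weight of a vector β ∈ F^Ω. -/
noncomputable def wwt {F Ω : Type*} [Field F] [Fintype Ω] (ω : Ω → ℝ) (β : Ω → F) : ℝ :=
  ∑ i ∈ univ.filter (fun i => β i ≠ 0), ω i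

/-- ω-weight of a set A ⊆ F^Ω. -/
noncomputable def WWt {F Ω : Type*} [Field F] [Fintype Ω] (ω : Ω → ℝ) (A : Set (Ω → F)) : ℝ :=
  ∑ i ∈ univ.filter (fun i => ∃ β ∈ A, β i ≠ 0), ω i

/-!
Double counting over `B`: for each coordinate `i`, the map `θ ↦ (f θ) i` is a linear functional
on `B`; if it is nonzero it is surjective, so it is nonzero on exactly a fraction `(q - 1) / q`
of `B`. Hence `q · ∑_{θ ∈ B} wt (f θ) = |B| (q - 1) · Wt (f[B])`, and local equivalence makes the
left-hand sides for `f` and `g` equal.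
-/

theorem exists_mem_range_apply_ne_zero_iff {R V Ω : Type*} [Semiring R] [AddCommMonoid V]
    [Module R V] (h : V →ₗ[R] (Ω → R)) (i : Ω) :
    (∃ β ∈ Set.range h, β i ≠ 0) ↔ LinearMap.proj i ∘ₗ h ≠ 0 := by
  simp [LinearMap.ext_iff]

section Counting

variable {F V : Type*} [Field F] [Fintype F] [AddCommGroup V] [Module F V] [Fintype V]

theorem LinearMap.card_filter_ne_zero_mul_card (φ : V →ₗ[F] F) (hφ : φ ≠ 0) :
    #{v | φ v ≠ 0} * Fintype.card F = Fintype.card V * (Fintype.card F - 1) := by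
  have hsurj : Function.Surjective φ := φ.surjective_or_eq_zero.resolve_right hφ
  have hV : Fintype.card V = Nat.card φ.ker * Fintype.card F := by
    rw [← Nat.card_eq_fintype_card, ← Nat.card_eq_fintype_card (α := F),
      φ.ker.card_eq_card_quotient_mul_card,
      Nat.card_congr (φ.quotKerEquivOfSurjective hsurj).toEquiv]
  have hker : #{v | φ v = 0} = Nat.card φ.ker := by
    simp [Nat.card_eq_fintype_card, Fintype.card_subtype]
  have hsplit : #{v | φ v = 0} + #{v | φ v ≠ 0} = Fintype.card V :=
    card_filter_add_card_filter_not _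
  obtain ⟨m, hm⟩ : ∃ m, Fintype.card F = m + 1 := Nat.exists_eq_add_one.2 Fintype.card_pos
  rw [hm] at hV ⊢
  rw [hV, hker] at hsplit
  have hN : #{v | φ v ≠ 0} = Nat.card φ.ker * m := by linarith
  rw [hN, hV, Nat.add_sub_cancel]
  ring

theorem LinearMap.card_mul_card_filter_ne_zero_eq_ite (φ : V →ₗ[F] F) :
    (Fintype.card F : ℝ) * #{v | φ v ≠ 0} =
      if φ = 0 then 0 else (Fintype.card V : ℝ) * (Fintype.card F - 1) := by
  split_ifs with hφ
  · simp [hφ]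
  · have := congrArg (Nat.cast (R := ℝ)) (φ.card_filter_ne_zero_mul_card hφ)
    push_cast [Nat.cast_sub Fintype.card_pos] at this
    linarith

theorem card_mul_sum_wwt_eq_mul_WWt_range {Ω : Type*} [Fintype Ω] (ω : Ω → ℝ)
    (h : V →ₗ[F] (Ω → F)) :
    (Fintype.card F : ℝ) * ∑ v, wwt ω (h v) =
      Fintype.card V * (Fintype.card F - 1) * WWt ω (Set.range h) := by
  simp only [wwt, WWt, sum_filter]
  rw [sum_comm, mul_sum, mul_sum]
  refine sum_congr rfl fun i _ => ?_
  have hcount := (LinearMap.proj i ∘ₗ h).card_mul_card_filter_ne_zero_eq_ite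
  simp only [LinearMap.comp_apply, LinearMap.proj_apply] at hcount
  rw [← sum_filter, sum_const, nsmul_eq_mul, ← mul_assoc, exists_mem_range_apply_ne_zero_iff]
  convert congrArg (· * ω i) hcount using 1
  · rfl
  split_ifs <;> simp_all

end Counting

theorem stmt2_general {F Ω : Type*} [Field F] [Fintype F] [Fintype Ω]
    {X : Type*} [AddCommGroup X] [Module F X] [FiniteDimensional F X]
    (ω : Ω → ℝ)
    (f g : X →ₗ[F] (Ω → F))
    (hloc : ∀ θ : X, wwt ω (f θ) = wwt ω (g θ))
    (B : Submodule F X) :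
    WWt ω (f '' (B : Set X)) = WWt ω (g '' (B : Set X)) := by
  have : Finite X := Module.finite_of_finite F
  have : Fintype B := Fintype.ofFinite B
  have himage (h : X →ₗ[F] (Ω → F)) : h '' B = Set.range (h ∘ₗ B.subtype) := by
    rw [LinearMap.coe_comp, Set.range_comp, Submodule.coe_subtype, Subtype.range_coe]
  have hfactor : (Fintype.card B : ℝ) * (Fintype.card F - 1) ≠ 0 := by
    have : (1 : ℝ) < Fintype.card F := mod_cast Fintype.one_lt_card
    exact mul_ne_zero (mod_cast Fintype.card_ne_zero) (by linarith)
  rw [himage, himage, ← mul_right_inj' hfactor, ← card_mul_sum_wwt_eq_mul_WWt_range,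
    ← card_mul_sum_wwt_eq_mul_WWt_range]
  simp only [LinearMap.comp_apply, Submodule.subtype_apply, hloc]

theorem stmt2 {F Ω : Type*} [Field F] [Fintype F] [Fintype Ω] [Nonempty Ω]
    {X : Type*} [AddCommGroup X] [Module F X] [FiniteDimensional F X]
    (ω : Ω → ℝ) (hω : ∀ i, 0 < ω i)
    (f g : X →ₗ[F] (Ω → F))
    (hloc : ∀ θ : X, wwt ω (f θ) = wwt ω (g θ))
    (B : Submodule F X) :
    WWt ω (f '' (B : Set X)) = WWt ω (g '' (B : Set X)) :=
  stmt2_general ω f g hloc B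
end

section
/- Let F be a finite field, X an F-vector space of dimension k ≥ 1, and f, g : X → F^Ω F-linear maps. If there exists m ∈ {1,…,k−1} such that Wt(f[B]) = Wt(g[B]) for every m-dimensional subspace B ≤ X, then wt(f(θ)) = wt(g(θ)) for all θ ∈ X. -/
open scoped Classical
open Finset

/-!
Put `H = wt ∘ f - wt ∘ g`. Summing `wt (f β)` over an `m`-dimensional `B` counts every coordinate
in the support of `f[B]` exactly `q ^ m - q ^ (m - 1)` times, so the hypothesis says that `H` sums
to zero over every `m`-dimensional subspace. Inside an `(m + 1)`-dimensional `C ∋ θ` these are the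
kernels of the nonzero functionals on `C`. As `H 0 = 0` and `H` is invariant under nonzero
scalars, counting the functionals that vanish on `U ⊔ F ∙ v`, first for `U = ⊥` and then for
`U = F ∙ θ`, inverts this hyperplane transform and gives `H θ = 0`.
-/

open Module Submodule

section LinearAlgebra

variable {F V : Type*} [Field F] [AddCommGroup V] [Module F V] [FiniteDimensional F V]

theorem Submodule.exists_le_finrank_eq (U : Submodule F V) {d : ℕ} (hUd : finrank F U ≤ d)
    (hd : d ≤ finrank F V) : ∃ W : Submodule F V, U ≤ W ∧ finrank F W = d := by
  induction d with
  | zero => exact ⟨U, le_rfl, Nat.le_zero.mp hUd⟩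
  | succ d ih =>
    rcases hUd.eq_or_lt with hU | hU
    · exact ⟨U, le_rfl, hU⟩
    obtain ⟨W, hUW, hW⟩ := ih (by omega) (by omega)
    have hWtop : W < ⊤ := lt_top_iff_ne_top.mpr fun hW' => by
      rw [hW', finrank_top] at hW
      omega
    obtain ⟨v, -, hv⟩ := SetLike.exists_of_lt hWtop
    exact ⟨W ⊔ F ∙ v, hUW.trans le_sup_left, by rw [finrank_sup_span_singleton hv, hW]⟩

variable [Fintype F]

theorem Submodule.natCard_dualAnnihilator (U : Submodule F V) :
    Nat.card U.dualAnnihilator = Fintype.card F ^ (finrank F V - finrank F U) := by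
  rw [natCard_eq_pow_finrank (K := F), Nat.card_eq_fintype_card]
  have := Subspace.finrank_add_finrank_dualAnnihilator_eq U
  congr 1
  omega

theorem Module.Dual.natCard_ker_of_ne_zero {φ : Dual F V} (hφ : φ ≠ 0) :
    Nat.card (LinearMap.ker φ) = Fintype.card F ^ (finrank F V - 1) := by
  rw [natCard_eq_pow_finrank (K := F), Nat.card_eq_fintype_card,
    ← Dual.finrank_ker_add_one_of_ne_zero hφ, Nat.add_sub_cancel]

end LinearAlgebra

section FiniteSpaces

variable {F V : Type*} [Field F] [Fintype F] [AddCommGroup V] [Module F V] [Fintype V]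
  {h : V → ℝ}

theorem sum_span_singleton_eq (h0 : h 0 = 0) (hsmul : ∀ c : F, c ≠ 0 → ∀ v, h (c • v) = h v)
    {θ : V} (hθ : θ ≠ 0) : ∑ v with v ∈ F ∙ θ, h v = (Fintype.card F - 1 : ℝ) * h θ := by
  have hline : univ.filter (· ∈ F ∙ θ) = univ.image (fun c : F => c • θ) := by
    ext
    simp [mem_span_singleton]
  rw [hline, sum_image fun a _ b _ hab => smul_left_injective F hθ hab,
    ← sum_erase_add _ _ (mem_univ 0), zero_smul, h0, add_zero,
    sum_congr rfl fun c hc => hsmul c (ne_of_mem_erase hc) θ, sum_const,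
    card_erase_of_mem (mem_univ _), card_univ, nsmul_eq_mul, Nat.cast_sub Fintype.card_pos,
    Nat.cast_one]

theorem Module.Dual.card_filter_ne_zero_of_ne_zero {φ : Dual F V} (hφ : φ ≠ 0) :
    #{v | φ v ≠ 0} = Fintype.card F ^ finrank F V - Fintype.card F ^ (finrank F V - 1) := by
  rw [filter_not, card_sdiff_of_subset (filter_subset _ _), card_univ, card_eq_pow_finrank (K := F),
    ← Dual.natCard_ker_of_ne_zero hφ, Nat.card_eq_fintype_card, Fintype.card_subtype]
  simp only [LinearMap.mem_ker]

theorem sum_dualAnnihilator_sum_ker [Fintype (Dual F V)] (U : Submodule F V) :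
    ∑ φ ∈ univ.filter (· ∈ U.dualAnnihilator), ∑ v with φ v = 0, h v =
      ∑ v, (Fintype.card F : ℝ) ^ (finrank F V - finrank F ↥(U ⊔ F ∙ v)) * h v := by
  rw [sum_comm' (s' := fun v => univ.filter (· ∈ (U ⊔ F ∙ v).dualAnnihilator)) (t' := univ)]
  · refine sum_congr rfl fun v _ => ?_
    rw [sum_const, nsmul_eq_mul, ← Fintype.card_subtype, ← Nat.card_eq_fintype_card,
      natCard_dualAnnihilator, Nat.cast_pow]
  · intro φ v
    simp only [dualAnnihilator_sup_eq, Submodule.mem_inf, mem_dualAnnihilator, ← LinearMap.mem_ker,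
      ← SetLike.le_def, span_singleton_le_iff_mem, mem_filter, mem_univ, true_and, and_true]

theorem sum_eq_of_sum_hyperplane_eq_zero
    (hyp : ∀ W : Submodule F V, finrank F W + 1 = finrank F V → ∑ w : W, h w = 0)
    (U : Submodule F V) :
    ∑ v, h v = (Fintype.card F : ℝ) ^ (finrank F V - finrank F U) * ∑ v with v ∈ U, h v
      + (Fintype.card F : ℝ) ^ (finrank F V - finrank F U - 1) * ∑ v with v ∉ U, h v := by
  have : Finite (Dual F V) := Module.finite_of_finite F
  have : Fintype (Dual F V) := Fintype.ofFinite _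
  have hker (φ : Dual F V) (hφ : φ ≠ 0) : ∑ v with φ v = 0, h v = 0 := by
    rw [sum_subtype (p := (· ∈ LinearMap.ker φ)) _ fun v => by simp]
    exact hyp _ (Dual.finrank_ker_add_one_of_ne_zero hφ)
  -- By `hyp`, only `φ = 0` contributes to the double sum.
  calc ∑ v, h v = ∑ φ ∈ univ.filter (· ∈ U.dualAnnihilator), ∑ v with φ v = 0, h v := by
        rw [sum_eq_single_of_mem 0 (by simp) fun φ _ hφ => hker φ hφ]
        simp
    _ = _ := by
        rw [sum_dualAnnihilator_sum_ker, ← sum_filter_add_sum_filter_not univ (· ∈ U), mul_sum,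
          mul_sum]
        congr 1 <;> refine sum_congr rfl fun v hv => ?_
        · rw [sup_eq_left.mpr ((span_singleton_le_iff_mem _ _).mpr (mem_filter.mp hv).2)]
        · rw [finrank_sup_span_singleton (mem_filter.mp hv).2, Nat.sub_add_eq]

theorem eq_zero_of_sum_hyperplane_eq_zero (hn : 2 ≤ finrank F V) (h0 : h 0 = 0)
    (hsmul : ∀ c : F, c ≠ 0 → ∀ v, h (c • v) = h v)
    (hyp : ∀ W : Submodule F V, finrank F W + 1 = finrank F V → ∑ w : W, h w = 0) (θ : V) :
    h θ = 0 := by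
  rcases eq_or_ne θ 0 with rfl | hθ
  · exact h0
  have hq : (1 : ℝ) < Fintype.card F := Nat.one_lt_cast.mpr Fintype.one_lt_card
  have hsplit (U : Submodule F V) := sum_filter_add_sum_filter_not univ (· ∈ U) h
  have htotal : ∑ v, h v = 0 := by
    have hbot : ∑ v with v ∈ (⊥ : Submodule F V), h v = 0 :=
      sum_eq_zero fun v hv => by rw [(mem_bot F).mp (mem_filter.mp hv).2, h0]
    have hrest : ∑ v with v ∉ (⊥ : Submodule F V), h v = ∑ v, h v := by
      rw [← hsplit ⊥, hbot, zero_add]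
    have hsum := sum_eq_of_sum_hyperplane_eq_zero hyp ⊥
    rw [finrank_bot, hbot, hrest, Nat.sub_zero, mul_zero, zero_add] at hsum
    have hpow : (1 : ℝ) < (Fintype.card F : ℝ) ^ (finrank F V - 1) := one_lt_pow₀ hq (by omega)
    have hfac : ((Fintype.card F : ℝ) ^ (finrank F V - 1) - 1) * ∑ v, h v = 0 := by
      linear_combination -hsum
    exact (mul_eq_zero.mp hfac).resolve_left (by linarith)
  have hline := sum_eq_of_sum_hyperplane_eq_zero hyp (F ∙ θ)
  have hcompl := hsplit (F ∙ θ)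
  rw [finrank_span_singleton hθ] at hline
  rw [htotal, sum_span_singleton_eq h0 hsmul hθ] at hline hcompl
  have hpow : (Fintype.card F : ℝ) ^ (finrank F V - 1)
      = (Fintype.card F : ℝ) ^ (finrank F V - 1 - 1) * Fintype.card F := by
    rw [← pow_succ]
    congr 1
    omega
  have hfac :
      (Fintype.card F : ℝ) ^ (finrank F V - 1 - 1) * (Fintype.card F - 1) ^ 2 * h θ = 0 := by
    linear_combination -hline - (Fintype.card F : ℝ) ^ (finrank F V - 1 - 1) * hcompl
      - (Fintype.card F - 1) * h θ * hpow
  refine (mul_eq_zero.mp hfac).resolve_left (mul_ne_zero ?_ ?_) <;>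
    exact pow_ne_zero _ (by linarith)

end FiniteSpaces

section Weights

variable {F Ω : Type*} [Field F] [Fintype Ω] (ω : Ω → ℝ)

theorem wwt_smul {c : F} (hc : c ≠ 0) (β : Ω → F) : wwt ω (c • β) = wwt ω β := by
  simp [wwt, hc]

theorem sum_wwt_eq [Fintype F] {W : Type*} [AddCommGroup W] [Module F W] [Fintype W]
    (f : W →ₗ[F] (Ω → F)) :
    ∑ w, wwt ω (f w) = ((Fintype.card F ^ finrank F W - Fintype.card F ^ (finrank F W - 1) : ℕ) : ℝ)
      * WWt ω (Set.range f) := by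
  simp only [wwt, WWt, sum_filter]
  rw [sum_comm, mul_sum]
  refine sum_congr rfl fun i _ => ?_
  rw [← sum_filter, sum_const, nsmul_eq_mul]
  by_cases hi : ∃ β ∈ Set.range f, β i ≠ 0
  · have hfi : LinearMap.proj i ∘ₗ f ≠ 0 := by
      obtain ⟨_, ⟨w, rfl⟩, hw⟩ := hi
      exact fun h0 => hw (LinearMap.congr_fun h0 w)
    rw [if_pos hi, ← Dual.card_filter_ne_zero_of_ne_zero hfi]
    rfl
  · push Not at hi
    rw [if_neg (by simpa using hi), filter_false_of_mem fun w _ => not_not.mpr (hi _ ⟨w, rfl⟩)]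
    simp

end Weights

theorem stmt3_general {F Ω : Type*} [Field F] [Fintype F] [Fintype Ω]
    {X : Type*} [AddCommGroup X] [Module F X] [FiniteDimensional F X]
    (ω : Ω → ℝ)
    (f g : X →ₗ[F] (Ω → F)) (k m : ℕ)
    (hk : Module.finrank F X = k)
    (hm1 : 1 ≤ m) (hm2 : m ≤ k - 1)
    (h : ∀ B : Submodule F X, Module.finrank F B = m →
      WWt ω (f '' (B : Set X)) = WWt ω (g '' (B : Set X))) :
    ∀ θ : X, wwt ω (f θ) = wwt ω (g θ) := by
  intro θ
  have : Finite X := Module.finite_of_finite F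
  have : Fintype X := Fintype.ofFinite X
  obtain ⟨C, hθC, hC⟩ := (F ∙ θ).exists_le_finrank_eq (d := m + 1)
    ((finrank_span_le_card ({θ} : Set X)).trans (by simp)) (by omega)
  have hyp (W : Submodule F C) (hW : finrank F W + 1 = finrank F C) :
      ∑ w : W, (wwt ω (f w) - wwt ω (g w)) = 0 := by
    have hB : finrank F (W.map C.subtype) = m := by
      rw [finrank_map_subtype_eq]
      omega
    have hsum (u : X →ₗ[F] (Ω → F)) := sum_wwt_eq ω (u ∘ₗ C.subtype ∘ₗ W.subtype)
    have himage (u : X →ₗ[F] (Ω → F)) :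
        Set.range (u ∘ₗ C.subtype ∘ₗ W.subtype) = u '' (W.map C.subtype : Set X) := by
      ext
      simp
    simp only [himage, LinearMap.comp_apply, Submodule.coe_subtype] at hsum
    rw [sum_sub_distrib, hsum, hsum, h _ hB, sub_self]
  have hθ := eq_zero_of_sum_hyperplane_eq_zero (h := fun v : C => wwt ω (f v) - wwt ω (g v))
    (by omega) (by simp) (fun c hc v => by simp [wwt_smul ω hc]) hyp
    ⟨θ, hθC (mem_span_singleton_self θ)⟩
  exact sub_eq_zero.mp hθ

theorem stmt3 {F Ω : Type*} [Field F] [Fintype F] [Fintype Ω] [Nonempty Ω]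
    {X : Type*} [AddCommGroup X] [Module F X] [FiniteDimensional F X]
    (ω : Ω → ℝ) (hω : ∀ i, 0 < ω i)
    (f g : X →ₗ[F] (Ω → F)) (k m : ℕ)
    (hk : Module.finrank F X = k) (hk1 : 1 ≤ k)
    (hm1 : 1 ≤ m) (hm2 : m ≤ k - 1)
    (h : ∀ B : Submodule F X, Module.finrank F B = m →
      WWt ω (f '' (B : Set X)) = WWt ω (g '' (B : Set X))) :
    ∀ θ : X, wwt ω (f θ) = wwt ω (g θ) :=
  stmt3_general ω f g k m hk hm1 hm2 h
end

section
/- Let F be a finite field with q elements, k ≥ 1, and let L, M be k × Ω matrices over F with column maps τ, η : Ω → F^k (τ(i) is the i-th column of L, η(i) the i-th column of M). Let f(γ) = γL and g(γ) = γM for row vectors γ ∈ F^k. Then wt(f(γ)) = wt(g(γ)) for all γ ∈ F^k if and only if for every 1-dimensional subspace I of F^k (viewed as column space), Σ_{i : τ(i) ≠ 0, τ(i) ∈ I} ω(i) = Σ_{i : η(i) ≠ 0, η(i) ∈ I} ω(i). -/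
/-!
Grouping the columns of `N` by the line they span, `wt(γN)` is the sum of the line weights of
the lines on which `γ` does not vanish; this gives `⇐`. For `⇒`, sum `wt(γN)` over `γ` in a
subspace `W`: a nonzero linear functional on `W` is nonzero at exactly `|W| - |W|/q` points, so a
column `v` contributes this same multiple of its weight when `γ ↦ γ ⬝ v` is nonzero on `W`, and
nothing otherwise. Taking for `W` the orthogonal of a subspace `I`, the weights of the columns
outside `I` agree for `L` and `M`; comparing `I = 0` with a line `I` gives the line weights.
-/

open scoped Classical
open Finset

open Module Matrix Submodule

theorem card_filter_apply_ne_zero {F V : Type*} [Field F] [Fintype F] [AddCommGroup V]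
    [Module F V] [Fintype V] {φ : V →ₗ[F] F} (hφ : φ ≠ 0) :
    #{x | φ x ≠ 0} = Fintype.card V - Fintype.card V / Fintype.card F := by
  have hV : Fintype.card V = #{x | φ x = 0} * Fintype.card F := by
    rw [← Nat.card_eq_fintype_card, ← Nat.card_eq_fintype_card (α := F),
      (LinearMap.ker φ).card_eq_card_quotient_mul_card,
      Nat.card_congr (φ.quotKerEquivOfSurjective (LinearMap.surjective_of_ne_zero hφ)).toEquiv,
      Nat.card_eq_fintype_card, Fintype.card_subtype]
    simp only [LinearMap.mem_ker]
  rw [hV, Nat.mul_div_cancel _ Fintype.card_pos, ← hV, filter_not,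
    card_sdiff_of_subset (filter_subset _ _), card_univ]

theorem sum_filter_ne_zero_eq_add {Ω R V β : Type*} [Fintype Ω] [AddCommMonoid β] [Semiring R]
    [AddCommMonoid V] [Module R V] (ω : Ω → β) (v : Ω → V) (I : Submodule R V) :
    ∑ i with v i ≠ 0, ω i = ∑ i with v i ≠ 0 ∧ v i ∈ I, ω i + ∑ i with v i ∉ I, ω i := by
  rw [← sum_filter_add_sum_filter_not _ (fun i => v i ∈ I), filter_filter, filter_filter]
  congr 2
  exact filter_congr fun i _ => ⟨And.right, fun hi => ⟨fun h0 => hi (h0 ▸ I.zero_mem), hi⟩⟩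

section DotProduct

variable {F n : Type*} [Field F] [Fintype n]

theorem exists_mem_orthogonalBilin_dotProduct_ne_zero_iff {I : Submodule F (n → F)}
    {v : n → F} : (∃ γ ∈ I.orthogonalBilin (dotProductBilin F F), γ ⬝ᵥ v ≠ 0) ↔ v ∉ I := by
  refine ⟨fun ⟨γ, hγ, hγv⟩ hv => hγv (dotProduct_comm γ v ▸ hγ v hv), fun hv => ?_⟩
  obtain ⟨f, hfv, hfI⟩ := exists_dual_map_eq_bot_of_notMem hv inferInstance
  have hf : ∀ x, (dotProductEquiv F n).symm f ⬝ᵥ x = f x := fun x =>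
    congrArg (· x) ((dotProductEquiv F n).apply_symm_apply f)
  refine ⟨(dotProductEquiv F n).symm f, fun x hx => ?_, by rwa [hf]⟩
  rw [dotProductBilin_apply_apply, dotProduct_comm, hf]
  exact LinearMap.le_ker_iff_map.2 hfI hx

theorem dotProduct_ne_zero_and_span_eq_iff {I : Submodule F (n → F)} (hI : finrank F I = 1)
    {γ : n → F} (hγ : ∃ v ∈ I, γ ⬝ᵥ v ≠ 0) {c : n → F} :
    γ ⬝ᵥ c ≠ 0 ∧ span F {c} = I ↔ c ≠ 0 ∧ c ∈ I := by
  constructor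
  · rintro ⟨hγc, rfl⟩
    exact ⟨fun h0 => hγc (h0 ▸ dotProduct_zero γ), mem_span_singleton_self c⟩
  · rintro ⟨hc0, hcI⟩
    have hIc := eq_span_singleton_of_mem_of_finrank_eq_one hI hcI hc0
    obtain ⟨v, hvI, hγv⟩ := hγ
    obtain ⟨a, rfl⟩ := mem_span_singleton.1 (hIc ▸ hvI)
    rw [dotProduct_smul, smul_eq_mul] at hγv
    exact ⟨right_ne_zero_of_mul hγv, hIc.symm⟩

theorem card_filter_dotProduct_ne_zero [Fintype F] (W : Submodule F (n → F)) (v : n → F) :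
    #{γ : W | (γ : n → F) ⬝ᵥ v ≠ 0} =
      if ∃ γ ∈ W, γ ⬝ᵥ v ≠ 0 then Fintype.card W - Fintype.card W / Fintype.card F else 0 := by
  split_ifs with hv
  · apply card_filter_apply_ne_zero (φ := (dotProductBilin F F).flip v ∘ₗ W.subtype)
    obtain ⟨γ, hγW, hγv⟩ := hv
    exact fun h => hγv (LinearMap.congr_fun h ⟨γ, hγW⟩)
  · simp only [not_exists, not_and, not_not] at hv
    exact card_eq_zero.2 (filter_eq_empty_iff.2 fun γ _ => not_not.2 (hv γ γ.2))

end DotProduct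

section Weights

variable {F Ω n : Type*} [Field F] [Fintype Ω] [Fintype n]

theorem wwt_vecMul (ω : Ω → ℝ) (N : Matrix n Ω F) (γ : n → F) :
    wwt ω (vecMul γ N) = ∑ i with γ ⬝ᵥ (fun r => N r i) ≠ 0, ω i := rfl

theorem sum_wwt_vecMul [Fintype F] (ω : Ω → ℝ) (N : Matrix n Ω F) (W : Submodule F (n → F)) :
    ∑ γ : W, wwt ω (vecMul γ N) = ((Fintype.card W - Fintype.card W / Fintype.card F : ℕ) : ℝ) *
      ∑ i with ∃ γ ∈ W, γ ⬝ᵥ (fun r => N r i) ≠ 0, ω i := by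
  simp only [wwt_vecMul, sum_filter]
  rw [sum_comm, mul_sum]
  refine sum_congr rfl fun i _ => ?_
  rw [← sum_filter, sum_const, card_filter_dotProduct_ne_zero, nsmul_eq_mul]
  split_ifs <;> simp

theorem sum_filter_notMem_eq_of_wwt_eq [Fintype F] {ω : Ω → ℝ} {L M : Matrix n Ω F}
    (h : ∀ γ, wwt ω (vecMul γ L) = wwt ω (vecMul γ M)) (I : Submodule F (n → F)) :
    ∑ i with (fun r => L r i) ∉ I, ω i = ∑ i with (fun r => M r i) ∉ I, ω i := by
  set W := I.orthogonalBilin (dotProductBilin F F)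
  have hpos : (0 : ℝ) < (Fintype.card W - Fintype.card W / Fintype.card F : ℕ) := by
    have := Nat.div_lt_self (Fintype.card_pos (α := W)) (Fintype.one_lt_card (α := F))
    exact_mod_cast Nat.sub_pos_of_lt this
  have hsum : ∑ γ : W, wwt ω (vecMul γ L) = ∑ γ : W, wwt ω (vecMul γ M) :=
    sum_congr rfl fun γ _ => h γ
  rw [sum_wwt_vecMul, sum_wwt_vecMul, mul_right_inj' hpos.ne'] at hsum
  simpa only [W, exists_mem_orthogonalBilin_dotProduct_ne_zero_iff] using hsum

theorem wwt_vecMul_eq_sum_lines [Fintype (Submodule F (n → F))] (ω : Ω → ℝ) (N : Matrix n Ω F)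
    (γ : n → F) :
    wwt ω (vecMul γ N) =
      ∑ I ∈ univ.filter fun I : Submodule F (n → F) => finrank F I = 1 ∧ ∃ v ∈ I, γ ⬝ᵥ v ≠ 0,
        ∑ i with (fun r => N r i) ≠ 0 ∧ (fun r => N r i) ∈ I, ω i := by
  rw [wwt_vecMul, ← sum_fiberwise_of_maps_to (g := fun i => span F {fun r => N r i})]
  · refine sum_congr rfl fun I hI => ?_
    obtain ⟨hI1, hγ⟩ := (mem_filter.1 hI).2
    rw [filter_filter]
    exact sum_congr (filter_congr fun i _ => dotProduct_ne_zero_and_span_eq_iff hI1 hγ)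
      fun _ _ => rfl
  · intro i hi
    have hγi := (mem_filter.1 hi).2
    have hi0 : (fun r => N r i) ≠ 0 := fun h0 => hγi (h0 ▸ dotProduct_zero γ)
    exact mem_filter.2 ⟨mem_univ _, finrank_span_singleton hi0, _,
      mem_span_singleton_self _, hγi⟩

theorem sum_filter_ne_zero_and_mem_eq_of_wwt_eq [Fintype F] {ω : Ω → ℝ} {L M : Matrix n Ω F}
    (h : ∀ γ, wwt ω (vecMul γ L) = wwt ω (vecMul γ M)) (I : Submodule F (n → F)) :
    ∑ i with (fun r => L r i) ≠ 0 ∧ (fun r => L r i) ∈ I, ω i =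
      ∑ i with (fun r => M r i) ≠ 0 ∧ (fun r => M r i) ∈ I, ω i := by
  have h0 := sum_filter_notMem_eq_of_wwt_eq h ⊥
  have hL := sum_filter_ne_zero_eq_add ω (fun i r => L r i) I
  have hM := sum_filter_ne_zero_eq_add ω (fun i r => M r i) I
  simp only [mem_bot, ne_eq] at h0 hL hM
  rw [hL, hM, sum_filter_notMem_eq_of_wwt_eq h I] at h0
  exact add_right_cancel h0

theorem wwt_vecMul_eq_of_forall_finrank_eq_one [Finite F] {ω : Ω → ℝ} {L M : Matrix n Ω F}
    (h : ∀ I : Submodule F (n → F), finrank F I = 1 →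
      ∑ i with (fun r => L r i) ≠ 0 ∧ (fun r => L r i) ∈ I, ω i =
        ∑ i with (fun r => M r i) ≠ 0 ∧ (fun r => M r i) ∈ I, ω i) (γ : n → F) :
    wwt ω (vecMul γ L) = wwt ω (vecMul γ M) := by
  have := Fintype.ofFinite (Submodule F (n → F))
  rw [wwt_vecMul_eq_sum_lines, wwt_vecMul_eq_sum_lines]
  exact sum_congr rfl fun I hI => h I (mem_filter.1 hI).2.1

end Weights

theorem stmt4_general {F Ω : Type*} [Field F] [Fintype F] [Fintype Ω]
    (ω : Ω → ℝ)
    (k : ℕ) (L M : Matrix (Fin k) Ω F) :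
    (∀ γ : Fin k → F, wwt ω (Matrix.vecMul γ L) = wwt ω (Matrix.vecMul γ M)) ↔
      (∀ I : Submodule F (Fin k → F), Module.finrank F I = 1 →
        ∑ i ∈ univ.filter (fun i => (fun r => L r i) ≠ 0 ∧ (fun r => L r i) ∈ I), ω i
          = ∑ i ∈ univ.filter (fun i => (fun r => M r i) ≠ 0 ∧ (fun r => M r i) ∈ I), ω i) := by
  exact ⟨fun h I _ => sum_filter_ne_zero_and_mem_eq_of_wwt_eq h I,
    wwt_vecMul_eq_of_forall_finrank_eq_one⟩

theorem stmt4 {F Ω : Type*} [Field F] [Fintype F] [Fintype Ω] [Nonempty Ω]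
    (q : ℕ) (hq : Fintype.card F = q)
    (ω : Ω → ℝ) (hω : ∀ i, 0 < ω i)
    (k : ℕ) (hk : 1 ≤ k) (L M : Matrix (Fin k) Ω F) :
    (∀ γ : Fin k → F, wwt ω (Matrix.vecMul γ L) = wwt ω (Matrix.vecMul γ M)) ↔
      (∀ I : Submodule F (Fin k → F), Module.finrank F I = 1 →
        ∑ i ∈ univ.filter (fun i => (fun r => L r i) ≠ 0 ∧ (fun r => L r i) ∈ I), ω i
          = ∑ i ∈ univ.filter (fun i => (fun r => M r i) ≠ 0 ∧ (fun r => M r i) ∈ I), ω i) :=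
  stmt4_general ω k L M
end

section
/- Let F be a finite field, Ω finite, ω : Ω → ℝ⁺. An F-linear automorphism φ of F^Ω preserves ω-weight (wt(φ(α)) = wt(α) for all α) if and only if there exists a bijection λ : Ω → Ω with ω(i) = ω(λ(i)) for all i ∈ Ω and supp(φ(α)) = λ[supp(α)] for all α ∈ F^Ω. -/
open scoped Classical
open Finset

/-!
With positive weights, `α` and `β` have disjoint supports iff `wt (α + a • β) = wt α + wt β` for
every `a ≠ 0`: if `i` lies in both supports, `a = -α i / β i` cancels coordinate `i`. This
characterization is linear in nature, so a weight-preserving linear map preserves disjointness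
of supports. The images of the unit vectors therefore have pairwise disjoint nonempty supports,
which forces them to be singletons `{σ j}` for a permutation `σ`; disjointness from these
singletons then gives `supp (φ α) = σ '' supp α`, and comparing weights of unit vectors gives
`ω ∘ σ = ω`. The converse is a reindexing of the weight sum.
-/

open Function Set

theorem Function.support_add_of_disjoint {ι M : Type*} [AddZeroClass M] {f g : ι → M}
    (h : Disjoint (support f) (support g)) : support (f + g) = support f ∪ support g := by
  ext i
  by_cases hf : f i = 0 <;> by_cases hg : g i = 0
  all_goals simp_all [Set.disjoint_left]

section Weight

variable {F ι : Type*} [Field F] [Fintype ι] {ω : ι → ℝ}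

theorem wwt_eq_sum_support (β : ι → F) :
    wwt ω β = ∑ i ∈ (support β).toFinset, ω i := by
  unfold wwt
  congr 1
  ext i
  simp

theorem wwt_eq_of_support_eq_singleton {β : ι → F} {j : ι} (h : support β = {j}) :
    wwt ω β = ω j := by
  simp [wwt_eq_sum_support, h]

theorem wwt_pi_single_one (ω : ι → ℝ) (j : ι) : wwt ω (Pi.single j (1 : F)) = ω j :=
  wwt_eq_of_support_eq_singleton (Pi.support_single_of_ne one_ne_zero)

theorem wwt_add_of_disjoint {α β : ι → F} (h : Disjoint (support α) (support β)) :
    wwt ω (α + β) = wwt ω α + wwt ω β := by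
  simp only [wwt_eq_sum_support, support_add_of_disjoint h, toFinset_union]
  exact Finset.sum_union (disjoint_toFinset.2 h)

theorem wwt_smul_s5 {a : F} (ha : a ≠ 0) (β : ι → F) : wwt ω (a • β) = wwt ω β := by
  rw [wwt_eq_sum_support, support_const_smul_of_ne_zero a β ha, wwt_eq_sum_support]

theorem wwt_add_smul_add_le (hω : ∀ i, 0 ≤ ω i) {α β : ι → F} {a : F} {i : ι}
    (hα : α i ≠ 0) (hi : (α + a • β) i = 0) :
    wwt ω (α + a • β) + ω i ≤ wwt ω α + wwt ω β := by
  have hsub : insert i (support (α + a • β)).toFinset ⊆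
      (support α).toFinset ∪ (support β).toFinset := by
    intro k hk
    simp only [Finset.mem_insert, mem_toFinset, mem_support, Finset.mem_union] at hk ⊢
    rcases hk with rfl | hk
    · exact Or.inl hα
    · by_contra! h
      simp [h.1, h.2] at hk
  calc wwt ω (α + a • β) + ω i = ∑ k ∈ insert i (support (α + a • β)).toFinset, ω k := by
        rw [Finset.sum_insert (by simpa using hi), wwt_eq_sum_support, add_comm]
    _ ≤ ∑ k ∈ (support α).toFinset ∪ (support β).toFinset, ω k :=
        Finset.sum_le_sum_of_subset_of_nonneg hsub fun k _ _ => hω k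
    _ ≤ wwt ω α + wwt ω β := by
        rw [wwt_eq_sum_support, wwt_eq_sum_support, ← Finset.sum_union_inter]
        exact le_add_of_nonneg_right (Finset.sum_nonneg fun k _ => hω k)

theorem disjoint_support_iff_wwt_add_smul (hω : ∀ i, 0 < ω i) {α β : ι → F} :
    Disjoint (support α) (support β) ↔
      ∀ a : F, a ≠ 0 → wwt ω (α + a • β) = wwt ω α + wwt ω β := by
  constructor
  · intro h a ha
    have hsupp : support (a • β) = support β := support_const_smul_of_ne_zero a β ha
    rw [wwt_add_of_disjoint (hsupp ▸ h), wwt_smul_s5 ha]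
  · intro h
    refine Set.disjoint_left.2 fun i (hα : α i ≠ 0) (hβ : β i ≠ 0) => ?_
    have ha : -(α i / β i) ≠ 0 := neg_ne_zero.2 (div_ne_zero hα hβ)
    have hi : (α + -(α i / β i) • β) i = 0 := by simp [div_mul_cancel₀ _ hβ]
    have := wwt_add_smul_add_le (fun k => (hω k).le) hα hi
    linarith [h _ ha, hω i]

theorem disjoint_support_map_iff {κ : Type*} [Fintype κ] {ω' : κ → ℝ} (hω : ∀ i, 0 < ω i)
    (hω' : ∀ k, 0 < ω' k) (φ : (ι → F) →ₗ[F] (κ → F)) (hφ : ∀ α, wwt ω' (φ α) = wwt ω α)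
    (α β : ι → F) :
    Disjoint (support (φ α)) (support (φ β)) ↔ Disjoint (support α) (support β) := by
  simp only [disjoint_support_iff_wwt_add_smul hω', disjoint_support_iff_wwt_add_smul hω,
    ← map_smul, ← map_add, hφ]

theorem wwt_eq_of_support_eq_image {κ : Type*} [Fintype κ] {ω' : κ → ℝ} (l : ι ≃ κ)
    (hl : ∀ i, ω i = ω' (l i)) {α : ι → F} {γ : κ → F} (h : support γ = l '' support α) :
    wwt ω' γ = wwt ω α := by
  rw [wwt_eq_sum_support, wwt_eq_sum_support]
  refine (Finset.sum_equiv l (fun i => ?_) fun i _ => hl i).symm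
  simp [h]

end Weight

section Automorphism

variable {F Ω : Type*} [Field F] [Fintype Ω] {ω : Ω → ℝ}

theorem exists_perm_support_map_single_eq (hω : ∀ i, 0 < ω i) (φ : (Ω → F) →ₗ[F] (Ω → F))
    (hφ : ∀ α, wwt ω (φ α) = wwt ω α) :
    ∃ σ : Equiv.Perm Ω, ∀ j, support (φ (Pi.single j 1)) = {σ j} := by
  have hdisj : ∀ j k, j ≠ k →
      Disjoint (support (φ (Pi.single j 1))) (support (φ (Pi.single k 1))) := fun j k hjk =>
    (disjoint_support_map_iff hω hω φ hφ _ _).2 (by simp [Pi.support_single_of_ne, hjk])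
  have hne : ∀ j, (support (φ (Pi.single j 1))).Nonempty := by
    refine fun j => nonempty_iff_ne_empty.2 fun h => (hω j).ne' ?_
    rw [← wwt_pi_single_one (F := F) ω j, ← hφ, wwt_eq_sum_support, h]
    simp
  choose σ hσ using hne
  have hinj : Injective σ := fun j k h =>
    by_contra fun hjk => (hdisj j k hjk).ne_of_mem (hσ j) (h ▸ hσ k) rfl
  refine ⟨Equiv.ofBijective σ hinj.bijective_of_finite,
    fun j => eq_singleton_iff_unique_mem.2 ⟨hσ j, fun i hi => ?_⟩⟩
  obtain ⟨k, rfl⟩ := Finite.surjective_of_injective hinj i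
  have hkj : k = j := by_contra fun hkj => (hdisj k j hkj).ne_of_mem (hσ k) hi rfl
  rw [hkj]
  rfl

theorem support_map_eq_image (hω : ∀ i, 0 < ω i) (φ : (Ω → F) →ₗ[F] (Ω → F))
    (hφ : ∀ α, wwt ω (φ α) = wwt ω α) (σ : Equiv.Perm Ω)
    (hσ : ∀ j, support (φ (Pi.single j 1)) = {σ j}) (α : Ω → F) :
    support (φ α) = σ '' support α := by
  ext i
  obtain ⟨j, rfl⟩ := σ.surjective i
  have h := disjoint_support_map_iff hω hω φ hφ α (Pi.single j 1)
  rw [hσ, Pi.support_single_of_ne one_ne_zero, Set.disjoint_singleton_right,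
    Set.disjoint_singleton_right, not_iff_not] at h
  rw [σ.injective.mem_set_image, h]

end Automorphism

theorem stmt5_general {F Ω : Type*} [Field F] [Fintype Ω]
    (ω : Ω → ℝ) (hω : ∀ i, 0 < ω i)
    (φ : (Ω → F) ≃ₗ[F] (Ω → F)) :
    (∀ α : Ω → F, wwt ω (φ α) = wwt ω α) ↔
      ∃ l : Equiv.Perm Ω, (∀ i : Ω, ω i = ω (l i)) ∧
        ∀ α : Ω → F, {i | φ α i ≠ 0} = l '' {i | α i ≠ 0} := by
  constructor
  · intro hφ
    obtain ⟨σ, hσ⟩ := exists_perm_support_map_single_eq hω φ.toLinearMap hφ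
    refine ⟨σ, fun j => ?_, support_map_eq_image hω φ.toLinearMap hφ σ hσ⟩
    calc ω j = wwt ω (φ (Pi.single j 1)) := by rw [hφ, wwt_pi_single_one]
      _ = ω (σ j) := wwt_eq_of_support_eq_singleton (hσ j)
  · rintro ⟨l, hl, hsupp⟩ α
    exact wwt_eq_of_support_eq_image l hl (hsupp α)

theorem stmt5 {F Ω : Type*} [Field F] [Fintype F] [Fintype Ω] [Nonempty Ω]
    (ω : Ω → ℝ) (hω : ∀ i, 0 < ω i)
    (φ : (Ω → F) ≃ₗ[F] (Ω → F)) :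
    (∀ α : Ω → F, wwt ω (φ α) = wwt ω α) ↔
      ∃ l : Equiv.Perm Ω, (∀ i : Ω, ω i = ω (l i)) ∧
        ∀ α : Ω → F, {i | φ α i ≠ 0} = l '' {i | α i ≠ 0} :=
  stmt5_general ω hω φ
end

section
/- Let F be a finite field, Ω finite, ω : Ω → ℝ⁺. If F^Ω is transitive with respect to ω-weight (for all α, β with wt(α) = wt(β) there is an ω-weight isometry sending α to β), then (Ω, ω) satisfies the unique decomposition property: for all I, J ⊆ Ω with Σ_{i∈I} ω(i) = Σ_{j∈J} ω(j) and every b ∈ ℝ, |{i ∈ I : ω(i) = b}| = |{j ∈ J : ω(j) = b}|. -/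
open scoped Classical
open Finset

lemma wwt_indicator {F Ω : Type*} [Field F] [Fintype Ω] (ω : Ω → ℝ) (S : Finset Ω) :
    wwt ω (fun i => if i ∈ S then (1 : F) else 0) = ∑ i ∈ S, ω i := by
  unfold wwt
  congr 1
  ext i
  by_cases h : i ∈ S <;> simp [h]

lemma exists_match {F Ω : Type*} [Field F] [Fintype F] [Fintype Ω]
    (ω : Ω → ℝ) (hω : ∀ i, 0 < ω i)
    (htrans : ∀ α β : Ω → F, wwt ω α = wwt ω β →
      ∃ φ : (Ω → F) ≃ₗ[F] (Ω → F),
        (∀ γ : Ω → F, wwt ω (φ γ) = wwt ω γ) ∧ β = φ α)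
    (I J : Finset Ω) (hS : ∑ i ∈ I, ω i = ∑ j ∈ J, ω j)
    (i0 : Ω) (hi0 : i0 ∈ I) (hmin : ∀ k ∈ I ∪ J, ω i0 ≤ ω k) :
    ∃ j0 ∈ J, ω j0 = ω i0 := by
  classical
  set α : Ω → F := fun i => if i ∈ I then 1 else 0 with hα
  set β : Ω → F := fun i => if i ∈ J then 1 else 0 with hβdef
  obtain ⟨φ, hφ, hβ⟩ := htrans α β
    (by rw [hα, hβdef, wwt_indicator, wwt_indicator, hS])
  set e : Ω → F := fun i => if i ∈ ({i0} : Finset Ω) then 1 else 0 with he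
  set γ : Ω → F := fun i => if i ∈ I.erase i0 then 1 else 0 with hγ
  have hαsum : α = γ + e := by
    funext i
    by_cases h : i = i0
    · subst h; simp [hα, hγ, he, hi0]
    · simp [hα, hγ, he, h, Finset.mem_erase]
  set δ : Ω → F := φ e with hδ
  have hδw : wwt ω δ = ω i0 := by
    rw [hδ, hφ, he, wwt_indicator, Finset.sum_singleton]
  have hγw : wwt ω (β - δ) = (∑ i ∈ I, ω i) - ω i0 := by
    have h1 : β - δ = φ γ := by
      rw [hβ, hαsum, map_add, hδ]
      abel
    rw [h1, hφ, hγ, wwt_indicator, Finset.sum_erase_eq_sub hi0]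
  set T : Finset Ω := Finset.univ.filter (fun k => δ k ≠ 0) with hT
  have hTw : ∑ k ∈ T, ω k = ω i0 := by rw [← hδw]; rfl
  have hA : Finset.univ.filter (fun k => (β - δ) k ≠ 0)
      = (T \ J) ∪ J.filter (fun j => δ j ≠ 1) := by
    ext k
    by_cases h : k ∈ J
    · simp only [hT, hβdef, Finset.mem_filter, Finset.mem_univ, true_and, Pi.sub_apply,
        Finset.mem_union, Finset.mem_sdiff, if_pos h, h, and_true, not_true, and_false,
        false_or, ne_eq, sub_eq_zero]
      exact not_congr eq_comm
    · simp only [hT, hβdef, Finset.mem_filter, Finset.mem_univ, true_and, Pi.sub_apply,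
        Finset.mem_union, Finset.mem_sdiff, if_neg h, h, not_false_iff, and_true, and_false,
        or_false, false_and, ne_eq, if_false, zero_sub, neg_eq_zero]
  have hdisj : Disjoint (T \ J) (J.filter (fun j => δ j ≠ 1)) := by
    rw [Finset.disjoint_left]
    intro k hk hk'
    exact (Finset.mem_sdiff.mp hk).2 (Finset.mem_filter.mp hk').1
  have hsplit : (∑ k ∈ T \ J, ω k) + ∑ k ∈ J.filter (fun j => δ j ≠ 1), ω k
      = (∑ i ∈ I, ω i) - ω i0 := by
    have := hγw
    unfold wwt at this
    rw [hA, Finset.sum_union hdisj] at this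
    exact this
  have hJsplit : (∑ j ∈ J.filter (fun j => δ j = 1), ω j)
      + ∑ j ∈ J.filter (fun j => δ j ≠ 1), ω j = ∑ j ∈ J, ω j :=
    Finset.sum_filter_add_sum_filter_not J (fun j => δ j = 1) ω
  have hsub : J.filter (fun j => δ j = 1) ⊆ T ∩ J := by
    intro j hj
    obtain ⟨hj1, hj2⟩ := Finset.mem_filter.mp hj
    refine Finset.mem_inter.mpr ⟨Finset.mem_filter.mpr ⟨Finset.mem_univ _, ?_⟩, hj1⟩
    rw [hj2]; exact one_ne_zero
  have hle : (∑ j ∈ J.filter (fun j => δ j = 1), ω j) ≤ ∑ k ∈ T ∩ J, ω k :=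
    Finset.sum_le_sum_of_subset_of_nonneg hsub (fun k _ _ => (hω k).le)
  have hTsplit : (∑ k ∈ T ∩ J, ω k) + ∑ k ∈ T \ J, ω k = ∑ k ∈ T, ω k :=
    Finset.sum_inter_add_sum_sdiff T J ω
  have hdiff0 : ∑ k ∈ T \ J, ω k ≤ 0 := by linarith [hS]
  have hTJ : T ⊆ J := by
    intro k hk
    by_contra hkJ
    have hkd : k ∈ T \ J := Finset.mem_sdiff.mpr ⟨hk, hkJ⟩
    have := Finset.single_le_sum (f := ω) (fun k _ => (hω k).le) hkd
    linarith [hω k]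
  have hTne : T.Nonempty := by
    rcases T.eq_empty_or_nonempty with h | h
    · rw [h, Finset.sum_empty] at hTw
      exact absurd hTw.symm (ne_of_gt (hω i0))
    · exact h
  obtain ⟨t, ht⟩ := hTne
  have htJ : t ∈ J := hTJ ht
  have h1 : ω t ≤ ω i0 := hTw ▸ Finset.single_le_sum (f := ω) (fun k _ => (hω k).le) ht
  have h2 : ω i0 ≤ ω t := hmin t (Finset.mem_union_right _ htJ)
  exact ⟨t, htJ, le_antisymm h1 h2⟩

theorem stmt8 {F Ω : Type*} [Field F] [Fintype F] [Fintype Ω] [Nonempty Ω]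
    (ω : Ω → ℝ) (hω : ∀ i, 0 < ω i)
    (htrans : ∀ α β : Ω → F, wwt ω α = wwt ω β →
      ∃ φ : (Ω → F) ≃ₗ[F] (Ω → F),
        (∀ γ : Ω → F, wwt ω (φ γ) = wwt ω γ) ∧ β = φ α) :
    ∀ I J : Finset Ω, (∑ i ∈ I, ω i) = (∑ j ∈ J, ω j) →
      ∀ b : ℝ, (I.filter (fun i => ω i = b)).card = (J.filter (fun j => ω j = b)).card := by
  classical
  have key : ∀ (K : Finset Ω) (k : Ω), k ∈ K → ∀ b : ℝ,
      (K.filter (fun i => ω i = b)).card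
        = ((K.erase k).filter (fun i => ω i = b)).card + (if ω k = b then 1 else 0) := by
    intro K k hk b
    rw [Finset.filter_erase]
    by_cases h : ω k = b
    · have hkmem : k ∈ K.filter (fun i => ω i = b) := Finset.mem_filter.mpr ⟨hk, h⟩
      have hpos : 0 < (K.filter (fun i => ω i = b)).card := Finset.card_pos.mpr ⟨k, hkmem⟩
      rw [Finset.card_erase_of_mem hkmem, if_pos h]
      omega
    · rw [Finset.erase_eq_of_notMem (by simp [h]), if_neg h, Nat.add_zero]
  suffices H : ∀ n (I J : Finset Ω), I.card ≤ n → (∑ i ∈ I, ω i) = (∑ j ∈ J, ω j) →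
      ∀ b : ℝ, (I.filter (fun i => ω i = b)).card = (J.filter (fun j => ω j = b)).card by
    intro I J hS b
    exact H I.card I J le_rfl hS b
  intro n
  induction n with
  | zero =>
    intro I J hcard hS b
    have hI : I = ∅ := Finset.card_eq_zero.mp (Nat.le_zero.mp hcard)
    subst hI
    rw [Finset.sum_empty] at hS
    have hJ : J = ∅ := by
      by_contra h
      obtain ⟨j, hj⟩ := Finset.nonempty_iff_ne_empty.mpr h
      have h1 : ω j ≤ ∑ j ∈ J, ω j := Finset.single_le_sum (fun k _ => (hω k).le) hj
      linarith [hω j]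
    subst hJ
    simp
  | succ n ih =>
    intro I J hcard hS b
    rcases I.eq_empty_or_nonempty with hI | hI
    · exact ih I J (by simp [hI]) hS b
    obtain ⟨i, hi⟩ := hI
    obtain ⟨k, hk, hkmin⟩ := Finset.exists_min_image (I ∪ J) ω ⟨i, Finset.mem_union_left _ hi⟩
    rcases Finset.mem_union.mp hk with hkI | hkJ
    · obtain ⟨j0, hj0, hj0w⟩ := exists_match ω hω htrans I J hS k hkI hkmin
      have hS' : (∑ i ∈ I.erase k, ω i) = ∑ j ∈ J.erase j0, ω j := by
        rw [Finset.sum_erase_eq_sub hkI, Finset.sum_erase_eq_sub hj0, hS, hj0w]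
      have hcard' : (I.erase k).card ≤ n := by
        rw [Finset.card_erase_of_mem hkI]
        omega
      have hrec := ih (I.erase k) (J.erase j0) hcard' hS' b
      rw [key I k hkI b, key J j0 hj0 b, hrec, hj0w]
    · obtain ⟨i0, hi0, hi0w⟩ := exists_match ω hω htrans J I hS.symm k hkJ
        (fun k' hk' => hkmin k' (by rwa [Finset.union_comm]))
      have hS' : (∑ i ∈ I.erase i0, ω i) = ∑ j ∈ J.erase k, ω j := by
        rw [Finset.sum_erase_eq_sub hi0, Finset.sum_erase_eq_sub hkJ, hS, hi0w]
      have hcard' : (I.erase i0).card ≤ n := by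
        have := Finset.card_pos.mpr ⟨i0, hi0⟩
        rw [Finset.card_erase_of_mem hi0]
        omega
      have hrec := ih (I.erase i0) (J.erase k) hcard' hS' b
      rw [key I i0 hi0 b, key J k hkJ b, hrec, hi0w]
end

section
/- Let F be a finite field, Ω finite, ω : Ω → ℝ⁺. If (Ω, ω) satisfies the unique decomposition property (for all I, J ⊆ Ω with Σ_{i∈I} ω(i) = Σ_{j∈J} ω(j), the multisets of weights on I and J coincide), then F^Ω satisfies the MacWilliams extension property with respect to ω-weight: every ω-weight preserving F-linear map from a subspace C ≤ F^Ω into F^Ω extends to an ω-weight isometry of F^Ω. -/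
open scoped Classical
open Finset

section aux
variable {F : Type*} [Field F] [Fintype F] {M : Type*} [AddCommGroup M] [Module F M] [Fintype M]

lemma aux_card_ker (g : M →ₗ[F] F) (hg : g ≠ 0) :
    Fintype.card M = Fintype.card F * Nat.card (LinearMap.ker g) := by
  have hsurj : Function.Surjective g := by
    obtain ⟨x, hx⟩ : ∃ x, g x ≠ 0 := by
      by_contra h; push_neg at h; exact hg (LinearMap.ext fun x => h x)
    intro c
    exact ⟨(c * (g x)⁻¹) • x, by
      simp [map_smul, smul_eq_mul, mul_assoc, inv_mul_cancel₀ hx]⟩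
  have h1 : Nat.card M = Nat.card (LinearMap.ker g) * Nat.card (M ⧸ LinearMap.ker g) :=
    Submodule.card_eq_card_quotient_mul_card _
  have h2 : Nat.card (M ⧸ LinearMap.ker g) = Nat.card F := by
    rw [Nat.card_congr (LinearMap.quotKerEquivRange g).toEquiv]
    rw [LinearMap.range_eq_top.2 hsurj]
    exact Nat.card_congr Submodule.topEquiv.toEquiv
  rw [← Nat.card_eq_fintype_card, ← Nat.card_eq_fintype_card (α := F), h1, h2]
  ring

lemma aux_card_filter_ne (g : M →ₗ[F] F) (hg : g ≠ 0) :
    Fintype.card F * (univ.filter fun x : M => g x ≠ 0).card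
      = (Fintype.card F - 1) * Fintype.card M := by
  have hK : (univ.filter fun x : M => g x = 0).card = Nat.card (LinearMap.ker g) := by
    rw [Nat.card_eq_fintype_card, ← Fintype.card_subtype]
    exact (Fintype.card_congr (Equiv.subtypeEquivRight fun x => LinearMap.mem_ker)).symm
  have hsplit : (univ.filter fun x : M => g x = 0).card
      + (univ.filter fun x : M => g x ≠ 0).card = Fintype.card M := by
    rw [Finset.card_filter_add_card_filter_not, Finset.card_univ]
  have hM := aux_card_ker g hg
  set q := Fintype.card F with hq
  have hq2 : 2 ≤ q := Fintype.one_lt_card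
  set K := Nat.card (LinearMap.ker g)
  have : (univ.filter fun x : M => g x ≠ 0).card = Fintype.card M - K := by omega
  rw [this, hM]
  have e1 : q * K - K = (q - 1) * K := by
    rw [Nat.sub_mul, one_mul]
  rw [e1]
  ring

end aux

section aux2
variable {F : Type*} [Field F] [Fintype F] {M : Type*} [AddCommGroup M] [Module F M] [Fintype M]
variable {Ω : Type*} [Fintype Ω]

lemma aux_master (ν ρ : Ω → (M →ₗ[F] F)) (Ωb : Finset Ω)
    (h : ∀ x : M, (Ωb.filter fun i => ν i x ≠ 0).card = (Ωb.filter fun i => ρ i x ≠ 0).card)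
    (D : Submodule F M) :
    (Ωb.filter fun i => (ν i) ∘ₗ D.subtype ≠ 0).card
      = (Ωb.filter fun i => (ρ i) ∘ₗ D.subtype ≠ 0).card := by
  have key : ∀ ν' : Ω → (M →ₗ[F] F),
      Fintype.card F * ∑ x : D, (Ωb.filter fun i => ν' i (x : M) ≠ 0).card
        = (Ωb.filter fun i => (ν' i) ∘ₗ D.subtype ≠ 0).card
            * ((Fintype.card F - 1) * Fintype.card D) := by
    intro ν'
    have swap : ∑ x : D, (Ωb.filter fun i => ν' i (x : M) ≠ 0).card
        = ∑ i ∈ Ωb, (univ.filter fun x : D => (ν' i ∘ₗ D.subtype) x ≠ 0).card := by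
      simp only [Finset.card_filter]
      rw [Finset.sum_comm]
      rfl
    rw [swap, Finset.mul_sum]
    have step : ∀ i ∈ Ωb,
        Fintype.card F * (univ.filter fun x : D => (ν' i ∘ₗ D.subtype) x ≠ 0).card
          = if (ν' i) ∘ₗ D.subtype ≠ 0 then (Fintype.card F - 1) * Fintype.card D else 0 := by
      intro i _
      by_cases hz : (ν' i) ∘ₗ D.subtype = 0
      · simp only [hz, if_neg (not_not_intro hz)]
        have : (univ.filter fun x : D => (0 : D →ₗ[F] F) x ≠ 0) = ∅ := by
          simp
        rw [hz] at *
        simp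
      · rw [if_pos hz]
        exact aux_card_filter_ne _ hz
    rw [Finset.sum_congr rfl step, ← Finset.sum_filter, Finset.sum_const, smul_eq_mul]
  have h1 := key ν
  have h2 := key ρ
  have hs : (∑ x : D, (Ωb.filter fun i => ν i (x : M) ≠ 0).card)
      = ∑ x : D, (Ωb.filter fun i => ρ i (x : M) ≠ 0).card :=
    Finset.sum_congr rfl fun x _ => h x
  rw [hs, h2] at h1
  have hq : 2 ≤ Fintype.card F := Fintype.one_lt_card
  have hD : 0 < Fintype.card D := Fintype.card_pos
  have hpos : 0 < (Fintype.card F - 1) * Fintype.card D :=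
    Nat.mul_pos (by omega) hD
  exact (Nat.eq_of_mul_eq_mul_right hpos h1).symm

lemma aux_prop (v w : M →ₗ[F] F) (hw : w ≠ 0) (hker : LinearMap.ker v = LinearMap.ker w) :
    ∃ u : F, u ≠ 0 ∧ v = u • w := by
  obtain ⟨x0, hx0⟩ : ∃ x, w x ≠ 0 := by
    by_contra h; push_neg at h; exact hw (LinearMap.ext fun x => h x)
  refine ⟨v x0 * (w x0)⁻¹, ?_, ?_⟩
  · have hv0 : v x0 ≠ 0 := by
      intro h
      have : x0 ∈ LinearMap.ker w := hker ▸ (LinearMap.mem_ker.2 h)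
      exact hx0 this
    exact mul_ne_zero hv0 (inv_ne_zero hx0)
  · ext x
    have hmem : x - (w x * (w x0)⁻¹) • x0 ∈ LinearMap.ker w := by
      simp [LinearMap.mem_ker, map_sub, map_smul, smul_eq_mul, mul_assoc,
        inv_mul_cancel₀ hx0]
    have hv : v (x - (w x * (w x0)⁻¹) • x0) = 0 := by
      rw [← LinearMap.mem_ker, hker]; exact hmem
    rw [map_sub, map_smul, sub_eq_zero, smul_eq_mul] at hv
    rw [hv]
    simp [smul_eq_mul]
    ring

lemma aux_sub_eq (H K : Submodule F M) (hle : H ≤ K) (hcard : Nat.card K ≤ Nat.card H) :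
    H = K := by
  apply SetLike.ext'
  apply Set.eq_of_subset_of_ncard_le hle ?_ (Set.toFinite _)
  rw [← Nat.card_coe_set_eq, ← Nat.card_coe_set_eq]
  exact hcard
end aux2
theorem stmt9 {F Ω : Type*} [Field F] [Fintype F] [Fintype Ω] [Nonempty Ω]
    (ω : Ω → ℝ) (hω : ∀ i, 0 < ω i)
    (hUDP : ∀ I J : Finset Ω, (∑ i ∈ I, ω i) = (∑ j ∈ J, ω j) →
      ∀ b : ℝ, (I.filter (fun i => ω i = b)).card = (J.filter (fun j => ω j = b)).card) :
    ∀ (C : Submodule F (Ω → F)) (f : C →ₗ[F] (Ω → F)),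
      (∀ α : C, wwt ω (f α) = wwt ω (α : Ω → F)) →
      ∃ φ : (Ω → F) ≃ₗ[F] (Ω → F),
        (∀ β : Ω → F, wwt ω (φ β) = wwt ω β) ∧ ∀ α : C, φ (α : Ω → F) = f α := by
  intro C f hf
  haveI : Fintype ↥C := Fintype.ofFinite _
  let lam : Ω → (↥C →ₗ[F] F) := fun i => (LinearMap.proj i) ∘ₗ f
  let mu : Ω → (↥C →ₗ[F] F) := fun i => (LinearMap.proj i) ∘ₗ C.subtype
  have lam_apply : ∀ i (x : ↥C), lam i x = f x i := fun i x => rfl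
  have mu_apply : ∀ i (x : ↥C), mu i x = (x : Ω → F) i := fun i x => rfl
  -- step 2 : per-class pointwise count equality
  have step2 : ∀ b : ℝ, ∀ x : ↥C,
      ((univ.filter fun i => ω i = b).filter fun i => lam i x ≠ 0).card
        = ((univ.filter fun i => ω i = b).filter fun i => mu i x ≠ 0).card := by
    intro b x
    have h0 := hUDP (univ.filter fun i => f x i ≠ 0)
      (univ.filter fun i => (x : Ω → F) i ≠ 0) (hf x) b
    simp only [Finset.filter_filter] at h0 ⊢
    simp only [lam_apply, mu_apply]
    simpa only [and_comm] using h0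
  -- master counting lemma
  have master : ∀ (b : ℝ) (D : Submodule F ↥C),
      ((univ.filter fun i => ω i = b).filter fun i => lam i ∘ₗ D.subtype ≠ 0).card
        = ((univ.filter fun i => ω i = b).filter fun i => mu i ∘ₗ D.subtype ≠ 0).card :=
    fun b D => aux_master lam mu _ (step2 b) D
  -- predicate translations
  have comp_zero_iff : ∀ (v : ↥C →ₗ[F] F) (D : Submodule F ↥C),
      v ∘ₗ D.subtype = 0 ↔ D ≤ LinearMap.ker v := by
    intro v D
    constructor
    · intro h x hx
      have := LinearMap.congr_fun h ⟨x, hx⟩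
      simpa [LinearMap.mem_ker] using this
    · intro h
      ext y
      have : (y : ↥C) ∈ LinearMap.ker v := h y.2
      simpa [LinearMap.mem_ker] using this
  have comp_ne_top : ∀ v : ↥C →ₗ[F] F, (v ∘ₗ (⊤ : Submodule F ↥C).subtype ≠ 0) ↔ v ≠ 0 := by
    intro v
    rw [not_iff_not, comp_zero_iff]
    constructor
    · intro h; ext x; have := h (x := x) trivial; simpa [LinearMap.mem_ker] using this
    · intro h x _; rw [h]; simp
  let kerOpt : (↥C →ₗ[F] F) → Option (Submodule F ↥C) :=
    fun v => if v = 0 then none else some (LinearMap.ker v)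
  have kerOpt_none : ∀ v : ↥C →ₗ[F] F, kerOpt v = none ↔ v = 0 := by
    intro v; by_cases h : v = 0 <;> simp [kerOpt, h]
  have kerOpt_some : ∀ (v : ↥C →ₗ[F] F) (H : Submodule F ↥C),
      kerOpt v = some H ↔ (v ≠ 0 ∧ LinearMap.ker v = H) := by
    intro v H; by_cases h : v = 0 <;> simp [kerOpt, h]
  -- fiber counts
  have fibers : ∀ c : ℝ × Option (Submodule F ↥C),
      (univ.filter fun i => (ω i, kerOpt (lam i)) = c).card
        = (univ.filter fun i => (ω i, kerOpt (mu i)) = c).card := by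
    rintro ⟨b, opt⟩
    have filt : ∀ (ν : Ω → (↥C →ₗ[F] F)),
        (univ.filter fun i => ((ω i, kerOpt (ν i)) : ℝ × Option (Submodule F ↥C)) = (b, opt))
          = ((univ.filter fun i => ω i = b).filter fun i => kerOpt (ν i) = opt) := by
      intro ν
      simp only [Finset.filter_filter, Prod.mk.injEq]
    rw [filt lam, filt mu]
    have hstot := master b ⊤
    simp only [comp_ne_top] at hstot
    obtain _ | H := opt
    · -- zero functionals
      have h1 := Finset.card_filter_add_card_filter_not
        (s := univ.filter fun i => ω i = b) (p := fun i => lam i = 0)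
      have h2 := Finset.card_filter_add_card_filter_not
        (s := univ.filter fun i => ω i = b) (p := fun i => mu i = 0)
      simp only [kerOpt_none]
      simp only [ne_eq] at hstot
      omega
    · by_cases hH : Nat.card ↥H * Fintype.card F = Fintype.card ↥C
      · -- genuine hyperplane case
        have hker_iff : ∀ v : ↥C →ₗ[F] F, v ≠ 0 →
            (LinearMap.ker v = H ↔ H ≤ LinearMap.ker v) := by
          intro v hv
          constructor
          · intro h; rw [h]
          · intro hle
            refine (aux_sub_eq H _ hle ?_).symm
            have h1 := aux_card_ker v hv
            have hq : 0 < Fintype.card F := Fintype.card_pos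
            have : Fintype.card F * Nat.card (LinearMap.ker v)
                = Fintype.card F * Nat.card ↥H := by
              rw [← h1, ← hH]; ring
            exact le_of_eq (Nat.eq_of_mul_eq_mul_left hq this)
        have split : ∀ ν : Ω → (↥C →ₗ[F] F),
            ((univ.filter fun i => ω i = b).filter fun i => kerOpt (ν i) = some H).card
              + ((univ.filter fun i => ω i = b).filter fun i => ν i ∘ₗ H.subtype ≠ 0).card
              = ((univ.filter fun i => ω i = b).filter fun i => ν i ≠ 0).card := by
          intro ν
          have h1 := Finset.card_filter_add_card_filter_not
            (s := (univ.filter fun i => ω i = b).filter fun i => ν i ≠ 0)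
            (p := fun i => H ≤ LinearMap.ker (ν i))
          simp only [Finset.filter_filter] at h1
          have e1 : ((univ.filter fun i => ω i = b).filter fun i => kerOpt (ν i) = some H)
              = (univ.filter fun i => ω i = b).filter fun i => ν i ≠ 0 ∧ H ≤ LinearMap.ker (ν i) := by
            apply Finset.filter_congr
            intro i _
            rw [kerOpt_some]
            by_cases hz : ν i = 0
            · simp [hz]
            · simp only [hz, true_and, not_false_iff, ne_eq, not_false_eq_true]
              exact hker_iff _ hz
          have e2 : ((univ.filter fun i => ω i = b).filter fun i => ν i ∘ₗ H.subtype ≠ 0)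
              = (univ.filter fun i => ω i = b).filter fun i => ν i ≠ 0 ∧ ¬ H ≤ LinearMap.ker (ν i) := by
            apply Finset.filter_congr
            intro i _
            rw [ne_eq, comp_zero_iff]
            constructor
            · intro h
              refine ⟨?_, h⟩
              intro hz
              exact h (by rw [hz]; simp [LinearMap.ker_zero])
            · exact fun h => h.2
          rw [e1, e2, Finset.filter_filter, Finset.filter_filter,
            Finset.filter_filter]
          simpa only [and_assoc] using h1
        have hmas := master b H
        have s1 := split lam
        have s2 := split mu
        omega
      · -- impossible kernel: both sides empty
        have hempty : ∀ v : ↥C →ₗ[F] F, kerOpt v ≠ some H := by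
          intro v hv
          rw [kerOpt_some] at hv
          obtain ⟨hv0, hkv⟩ := hv
          apply hH
          rw [← hkv, aux_card_ker v hv0, mul_comm]
        rw [Finset.filter_false_of_mem (fun i _ => hempty (lam i)),
          Finset.filter_false_of_mem (fun i _ => hempty (mu i))]
  -- build the matching bijection
  have hcards : ∀ c : ℝ × Option (Submodule F ↥C),
      Fintype.card {i // (ω i, kerOpt (lam i)) = c} = Fintype.card {i // (ω i, kerOpt (mu i)) = c} := by
    intro c
    rw [Fintype.card_subtype, Fintype.card_subtype]
    exact fibers c
  let σ : Ω ≃ Ω := Equiv.ofFiberEquiv (f := fun i => (ω i, kerOpt (lam i)))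
    (g := fun i => (ω i, kerOpt (mu i))) fun c => Fintype.equivOfCardEq (hcards c)
  have hσ : ∀ i, ((ω (σ i), kerOpt (mu (σ i))) : ℝ × Option (Submodule F ↥C))
      = (ω i, kerOpt (lam i)) := fun i =>
    Equiv.ofFiberEquiv_map (fun c => Fintype.equivOfCardEq (hcards c)) i
  have hω' : ∀ i, ω (σ i) = ω i := fun i => congrArg Prod.fst (hσ i)
  have hmatch : ∀ i, ∃ u : F, u ≠ 0 ∧ lam i = u • mu (σ i) := by
    intro i
    have h2 : kerOpt (mu (σ i)) = kerOpt (lam i) := congrArg Prod.snd (hσ i)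
    by_cases h : lam i = 0
    · have hm : mu (σ i) = 0 := by
        apply (kerOpt_none _).1
        rw [h2]
        exact (kerOpt_none _).2 h
      exact ⟨1, one_ne_zero, by rw [h, hm, smul_zero]⟩
    · have hm : mu (σ i) ≠ 0 := by
        intro hz
        rw [(kerOpt_none _).2 hz] at h2
        exact h ((kerOpt_none _).1 h2.symm)
      have hker : LinearMap.ker (lam i) = LinearMap.ker (mu (σ i)) := by
        have ha := (kerOpt_some (mu (σ i)) (LinearMap.ker (mu (σ i)))).2 ⟨hm, rfl⟩
        rw [h2] at ha
        exact ((kerOpt_some _ _).1 ha).2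
      exact aux_prop _ _ hm hker
  choose u hu hlam using hmatch
  -- build the monomial linear equivalence
  let A : (Ω → F) →ₗ[F] (Ω → F) :=
    LinearMap.pi fun i => u i • (LinearMap.proj (σ i) : (Ω → F) →ₗ[F] F)
  let B : (Ω → F) →ₗ[F] (Ω → F) :=
    LinearMap.pi fun j => (u (σ.symm j))⁻¹ • (LinearMap.proj (σ.symm j) : (Ω → F) →ₗ[F] F)
  have A_apply : ∀ (x : Ω → F) i, A x i = u i * x (σ i) := fun x i => rfl
  have B_apply : ∀ (x : Ω → F) j, B x j = (u (σ.symm j))⁻¹ * x (σ.symm j) := fun x j => rfl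
  have hAB : A ∘ₗ B = LinearMap.id := by
    ext x i
    simp only [LinearMap.comp_apply, LinearMap.id_apply, A_apply, B_apply,
      Equiv.symm_apply_apply]
    rw [← mul_assoc, mul_inv_cancel₀ (hu i), one_mul]
  have hBA : B ∘ₗ A = LinearMap.id := by
    ext x j
    simp only [LinearMap.comp_apply, LinearMap.id_apply, A_apply, B_apply,
      Equiv.apply_symm_apply]
    rw [← mul_assoc, inv_mul_cancel₀ (hu (σ.symm j)), one_mul]
  refine ⟨LinearEquiv.ofLinear A B hAB hBA, ?_, ?_⟩
  · intro β
    show wwt ω (A β) = wwt ω β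
    unfold wwt
    have hfil : (univ.filter fun i => A β i ≠ 0) = univ.filter fun i => β (σ i) ≠ 0 := by
      apply Finset.filter_congr
      intro i _
      rw [A_apply]
      simp [mul_eq_zero, hu i]
    rw [hfil]
    apply Finset.sum_equiv σ
    · intro i; simp
    · intro i _; exact (hω' i).symm
  · intro α
    show A (α : Ω → F) = f α
    funext i
    rw [A_apply]
    have := LinearMap.congr_fun (hlam i) α
    rw [lam_apply] at this
    rw [this]
    simp only [LinearMap.smul_apply, smul_eq_mul, mu_apply]
end

section
/- Let F be a finite field and C ≤ F^Ω a subspace with dim C = k ≥ 1. If C is a constant weight code with respect to ω (wt(α) = wt(β) for all nonzero α, β ∈ C), then Wt(D) = Wt(Q) for all subspaces D, Q ≤ C with dim D = dim Q. -/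
open scoped Classical
open Finset

/-!
Double counting the pairs (β, i) with β ∈ D and β i ≠ 0 gives
`∑_{β ∈ D} wt β = ∑_i ω i · #{β ∈ D | β i ≠ 0}`. On the support of D the coordinate `β ↦ β i`
is a nonzero functional, whose kernel has index q = |F|, so `q · ∑_{β ∈ D} wt β = |D| (q - 1) Wt D`.
If every nonzero vector has weight w, the left side is `q (|D| - 1) w`, so `Wt D` depends only on
`|D| = q ^ dim D`.
-/

theorem Module.Dual.card_filter_ne_zero_mul_card {K V : Type*} [Field K] [Fintype K]
    [AddCommGroup V] [Module K V] [Fintype V] {f : Module.Dual K V} (hf : f ≠ 0) :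
    #{v | f v ≠ 0} * Fintype.card K = Fintype.card V * (Fintype.card K - 1) := by
  have hV : Fintype.card V = Fintype.card (LinearMap.ker f) * Fintype.card K := by
    rw [Module.card_eq_pow_finrank (K := K) (V := V),
      Module.card_eq_pow_finrank (K := K) (V := LinearMap.ker f),
      ← f.finrank_ker_add_one_of_ne_zero hf, pow_succ]
  have hsplit : #{v | f v ≠ 0} + Fintype.card (LinearMap.ker f) = Fintype.card V := by
    have hker : Fintype.card (LinearMap.ker f) = #{v | ¬f v ≠ 0} := by
      simp only [not_not, ← Fintype.card_subtype, LinearMap.mem_ker]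
    rw [hker, card_filter_add_card_filter_not, card_univ]
  have hcount : #{v | f v ≠ 0} = Fintype.card (LinearMap.ker f) * (Fintype.card K - 1) := by
    rw [Nat.mul_sub_one]; omega
  rw [hcount, hV]; ring

theorem sum_wwt_eq_sum_card_mul {F Ω ι : Type*} [Field F] [Fintype Ω] [Fintype ι]
    (ω : Ω → ℝ) (v : ι → Ω → F) :
    ∑ j, wwt ω (v j) = ∑ i, (#{j | v j i ≠ 0} : ℝ) * ω i := by
  simp only [wwt, sum_filter]
  rw [sum_comm]
  refine sum_congr rfl fun i _ => ?_
  rw [← sum_filter, sum_const, nsmul_eq_mul]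

theorem card_mul_sum_wwt {F Ω : Type*} [Field F] [Fintype F] [Fintype Ω] (ω : Ω → ℝ)
    (D : Submodule F (Ω → F)) :
    (Fintype.card F : ℝ) * ∑ β : D, wwt ω (β : Ω → F)
      = Fintype.card D * (Fintype.card F - 1) * WWt ω (D : Set (Ω → F)) := by
  rw [sum_wwt_eq_sum_card_mul, WWt, mul_sum, mul_sum, sum_filter]
  refine sum_congr rfl fun i _ => ?_
  split_ifs with hi
  · obtain ⟨β, hβ, hβi⟩ := hi
    have hf : (LinearMap.proj i ∘ₗ D.subtype : Module.Dual F D) ≠ 0 := fun h =>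
      hβi (by simpa using LinearMap.congr_fun h ⟨β, hβ⟩)
    have hcount : (#{β : D | (β : Ω → F) i ≠ 0} : ℝ) * Fintype.card F
        = Fintype.card D * (Fintype.card F - 1) := by
      have := Module.Dual.card_filter_ne_zero_mul_card hf
      rw [← Nat.cast_pred Fintype.card_pos]
      exact_mod_cast this
    linear_combination ω i * hcount
  · have hempty : #{β : D | (β : Ω → F) i ≠ 0} = 0 :=
      card_eq_zero.mpr (filter_eq_empty_iff.mpr fun β _ hβ => hi ⟨β, β.2, hβ⟩)
    simp [hempty]

theorem sum_wwt_eq_of_forall_wwt_eq {F Ω : Type*} [Field F] [Fintype F] [Fintype Ω]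
    (ω : Ω → ℝ) (D : Submodule F (Ω → F)) {w : ℝ} (hw : ∀ β ∈ D, β ≠ 0 → wwt ω β = w) :
    ∑ β : D, wwt ω (β : Ω → F) = (Fintype.card D - 1) * w := by
  have hzero : wwt ω ((0 : D) : Ω → F) = 0 := by simp [wwt]
  rw [← sum_erase_add _ _ (mem_univ 0), hzero, add_zero,
    sum_congr rfl fun (β : D) hβ => hw β β.2 (by simpa using ne_of_mem_erase hβ), sum_const,
    card_erase_of_mem (mem_univ 0), card_univ, nsmul_eq_mul, Nat.cast_pred Fintype.card_pos]

theorem WWt_eq_of_forall_wwt_eq {F Ω : Type*} [Field F] [Fintype F] [Fintype Ω]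
    (ω : Ω → ℝ) (D : Submodule F (Ω → F)) {w : ℝ} (hw : ∀ β ∈ D, β ≠ 0 → wwt ω β = w) :
    WWt ω (D : Set (Ω → F))
      = Fintype.card F * (Fintype.card D - 1) / (Fintype.card D * (Fintype.card F - 1)) * w := by
  have hdouble := card_mul_sum_wwt ω D
  rw [sum_wwt_eq_of_forall_wwt_eq ω D hw] at hdouble
  have hq : (1 : ℝ) < Fintype.card F := by exact_mod_cast Fintype.one_lt_card
  have hD : (0 : ℝ) < Fintype.card D := by exact_mod_cast Fintype.card_pos
  rw [div_mul_eq_mul_div, eq_div_iff (by positivity)]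
  linear_combination -hdouble

theorem stmt10_general {F Ω : Type*} [Field F] [Fintype F] [Fintype Ω]
    (ω : Ω → ℝ)
    (C : Submodule F (Ω → F))
    (hconst : ∀ α ∈ C, ∀ β ∈ C, α ≠ 0 → β ≠ 0 → wwt ω α = wwt ω β)
    (D Q : Submodule F (Ω → F)) (hD : D ≤ C) (hQ : Q ≤ C)
    (hdim : Module.finrank F D = Module.finrank F Q) :
    WWt ω (D : Set (Ω → F)) = WWt ω (Q : Set (Ω → F)) := by
  obtain ⟨w, hw⟩ : ∃ w, ∀ β ∈ C, β ≠ 0 → wwt ω β = w := by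
    by_cases h : ∃ α ∈ C, α ≠ 0
    · obtain ⟨α, hα, hα0⟩ := h
      exact ⟨wwt ω α, fun β hβ hβ0 => hconst β hβ α hα hβ0 hα0⟩
    · push Not at h
      exact ⟨0, fun β hβ hβ0 => absurd (h β hβ) hβ0⟩
  have hcard : Fintype.card D = Fintype.card Q := by
    rw [Module.card_eq_pow_finrank (K := F) (V := D),
      Module.card_eq_pow_finrank (K := F) (V := Q), hdim]
  rw [WWt_eq_of_forall_wwt_eq ω D fun β hβ => hw β (hD hβ),
    WWt_eq_of_forall_wwt_eq ω Q fun β hβ => hw β (hQ hβ), hcard]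

theorem stmt10 {F Ω : Type*} [Field F] [Fintype F] [Fintype Ω] [Nonempty Ω]
    (ω : Ω → ℝ) (hω : ∀ i, 0 < ω i)
    (C : Submodule F (Ω → F)) (k : ℕ) (hk : Module.finrank F C = k) (hk1 : 1 ≤ k)
    (hconst : ∀ α ∈ C, ∀ β ∈ C, α ≠ 0 → β ≠ 0 → wwt ω α = wwt ω β)
    (D Q : Submodule F (Ω → F)) (hD : D ≤ C) (hQ : Q ≤ C)
    (hdim : Module.finrank F D = Module.finrank F Q) :
    WWt ω (D : Set (Ω → F)) = WWt ω (Q : Set (Ω → F)) :=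
  stmt10_general ω C hconst D Q hD hQ hdim
end

section
/- Let F be a finite field and C ≤ F^Ω a subspace with dim C = k ≥ 1. If there exists m ∈ {1,…,k−1} such that all m-dimensional subspaces of C have the same ω-weight Wt, then C is a constant weight code: wt(α) = wt(β) for all nonzero α, β ∈ C. -/
open scoped Classical
open Finset

section Aux

variable {F Ω : Type*} [Field F] [Fintype F] [Fintype Ω]

lemma chi_sup_iff (E : Submodule F (Ω → F)) (v : Ω → F) (i : Ω) :
    (∃ β ∈ ((E ⊔ Submodule.span F {v} : Submodule F (Ω → F)) : Set (Ω → F)), β i ≠ 0) ↔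
      (∃ β ∈ (E : Set (Ω → F)), β i ≠ 0) ∨ v i ≠ 0 := by
  constructor
  · rintro ⟨β, hβ, hne⟩
    simp only [SetLike.mem_coe, Submodule.mem_sup] at hβ
    obtain ⟨e, he, z, hz, rfl⟩ := hβ
    rw [Submodule.mem_span_singleton] at hz
    obtain ⟨c, rfl⟩ := hz
    by_contra hcon
    push_neg at hcon
    obtain ⟨h1, h2⟩ := hcon
    apply hne
    simp only [Pi.add_apply, Pi.smul_apply, smul_eq_mul]
    rw [h1 e he, h2, mul_zero, add_zero]
  · rintro (⟨β, hβ, hne⟩ | hv)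
    · exact ⟨β, Submodule.mem_sup_left hβ, hne⟩
    · exact ⟨v, Submodule.mem_sup_right (Submodule.mem_span_singleton_self v), hv⟩

lemma WWt_sup (ω : Ω → ℝ) (E : Submodule F (Ω → F)) (v : Ω → F) :
    WWt ω ((E ⊔ Submodule.span F {v} : Submodule F (Ω → F)) : Set (Ω → F)) =
      WWt ω (E : Set (Ω → F)) +
        ∑ i ∈ univ.filter (fun i => v i ≠ 0 ∧ ¬∃ β ∈ (E : Set (Ω → F)), β i ≠ 0), ω i := by
  unfold WWt
  rw [sum_filter, sum_filter, sum_filter, ← sum_add_distrib]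
  refine sum_congr rfl fun i _ => ?_
  rw [show (∃ β ∈ ((E ⊔ Submodule.span F {v} : Submodule F (Ω → F)) : Set (Ω → F)), β i ≠ 0) ↔ _
    from chi_sup_iff E v i]
  by_cases h1 : ∃ β ∈ (E : Set (Ω → F)), β i ≠ 0 <;> by_cases h2 : v i ≠ 0
  · rw [if_pos (Or.inl h1), if_pos h1, if_neg (fun hc => hc.2 h1)]; ring
  · rw [if_pos (Or.inl h1), if_pos h1, if_neg (fun hc => hc.2 h1)]; ring
  · rw [if_pos (Or.inr h2), if_neg h1, if_pos ⟨h2, h1⟩]; ring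
  · rw [if_neg (fun hc => hc.elim h1 h2), if_neg h1, if_neg (fun hc => h2 hc.1)]; ring

lemma finrank_sup_span (E : Submodule F (Ω → F)) (v : Ω → F) (hv : v ∉ E) :
    Module.finrank F ↥(E ⊔ Submodule.span F {v}) = Module.finrank F E + 1 := by
  have hv0 : v ≠ 0 := fun h => hv (h ▸ E.zero_mem)
  have hinf : E ⊓ Submodule.span F {v} = ⊥ := by
    rw [eq_bot_iff]
    intro x hx
    rw [Submodule.mem_inf] at hx
    obtain ⟨hxE, hxs⟩ := hx
    rw [Submodule.mem_span_singleton] at hxs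
    obtain ⟨c, rfl⟩ := hxs
    rcases eq_or_ne c 0 with rfl | hc
    · simp
    · exact absurd (by simpa [hc] using E.smul_mem c⁻¹ hxE) hv
  have := Submodule.finrank_sup_add_finrank_inf_eq E (Submodule.span F {v})
  rw [hinf, finrank_span_singleton hv0] at this
  simpa using this

/-- number of vectors of C that are nonzero at coordinate i. -/
lemma card_filter_ne (C : Submodule F (Ω → F)) (i : Ω)
    (hi : ∃ β ∈ (C : Set (Ω → F)), β i ≠ 0) :
    ((univ : Finset C).filter (fun v : ↥C => (v : Ω → F) i ≠ 0)).card =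
      Fintype.card F ^ Module.finrank F C - Fintype.card F ^ (Module.finrank F C - 1) := by
  obtain ⟨β, hβC, hβi⟩ := hi
  set ψ : C →ₗ[F] F := (LinearMap.proj i).comp C.subtype with hψ
  have hrange : LinearMap.range ψ = ⊤ := by
    rw [LinearMap.range_eq_top]
    intro c
    refine ⟨(c * (β i)⁻¹) • ⟨β, hβC⟩, ?_⟩
    simp [ψ, mul_assoc, inv_mul_cancel₀ hβi]
  have hker : Module.finrank F ↥(LinearMap.ker ψ) = Module.finrank F C - 1 := by
    have := LinearMap.finrank_range_add_finrank_ker ψ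
    rw [hrange, finrank_top, Module.finrank_self] at this
    omega
  have hcardker : ((univ : Finset C).filter (fun v : ↥C => ¬ (v : Ω → F) i ≠ 0)).card =
      Fintype.card F ^ (Module.finrank F C - 1) := by
    have h1 : ((univ : Finset C).filter (fun v : ↥C => ¬ (v : Ω → F) i ≠ 0)) =
        ((univ : Finset C).filter (fun v : ↥C => ψ v = 0)) := by
      refine filter_congr fun v _ => ?_
      simp [ψ]
    rw [h1, ← Fintype.card_subtype]
    have h2 : Fintype.card {v : C // ψ v = 0} = Fintype.card ↥(LinearMap.ker ψ) := by
      apply Fintype.card_congr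
      exact Equiv.subtypeEquivRight fun v => (LinearMap.mem_ker).symm
    rw [h2, Module.card_eq_pow_finrank (K := F), hker]
  have htot := Finset.card_filter_add_card_filter_not
    (s := (univ : Finset C)) (fun v : ↥C => (v : Ω → F) i ≠ 0)
  rw [card_univ, Module.card_eq_pow_finrank (K := F) (V := C)] at htot
  omega

lemma exists_not_mem (C E : Submodule F (Ω → F)) (hE : E ≤ C)
    (hlt : Module.finrank F E < Module.finrank F C) :
    ∃ v ∈ C, v ∉ E := by
  by_contra hcon
  push_neg at hcon
  have hle : C ≤ E := hcon
  have : C = E := le_antisymm hle hE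
  rw [this] at hlt
  omega

/-- The key counting identity. -/
lemma key_identity (ω : Ω → ℝ) (C : Submodule F (Ω → F)) (k : ℕ)
    (hk : Module.finrank F C = k) (m : ℕ) (hm1 : 1 ≤ m) (hmk : m ≤ k - 1) (hk1 : 1 ≤ k)
    (W : ℝ)
    (hW : ∀ D : Submodule F (Ω → F), D ≤ C → Module.finrank F D = m →
      WWt ω (D : Set (Ω → F)) = W)
    (E : Submodule F (Ω → F)) (hE : E ≤ C) (hEm : Module.finrank F E = m - 1) :
    ((Fintype.card F : ℝ) ^ k - (Fintype.card F : ℝ) ^ (m - 1)) * (W - WWt ω (E : Set (Ω → F)))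
      = ((Fintype.card F : ℝ) ^ k - (Fintype.card F : ℝ) ^ (k - 1)) *
        (WWt ω (C : Set (Ω → F)) - WWt ω (E : Set (Ω → F))) := by
  classical
  have hq2 : (1 : ℕ) < Fintype.card F := Fintype.one_lt_card
  set S : Finset C := (univ : Finset C).filter (fun v : ↥C => (v : Ω → F) ∉ E) with hS
  -- step 1 : each v in S gives the same "extra weight"
  have hstep1 : ∀ v ∈ S, (∑ i ∈ univ.filter
      (fun i => (v : Ω → F) i ≠ 0 ∧ ¬∃ β ∈ (E : Set (Ω → F)), β i ≠ 0), ω i)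
      = W - WWt ω (E : Set (Ω → F)) := by
    intro v hv
    rw [hS, mem_filter] at hv
    obtain ⟨-, hvE⟩ := hv
    have hsup : WWt ω ((E ⊔ Submodule.span F {(v : Ω → F)} : Submodule F (Ω → F)) :
        Set (Ω → F)) = W := by
      apply hW
      · refine sup_le hE ?_
        rw [Submodule.span_le, Set.singleton_subset_iff]
        exact v.2
      · rw [finrank_sup_span E _ hvE, hEm]
        omega
    have := WWt_sup ω E (v : Ω → F)
    rw [hsup] at this
    linarith
  have hsum1 : ∑ v ∈ S, (∑ i ∈ univ.filter
      (fun i => (v : Ω → F) i ≠ 0 ∧ ¬∃ β ∈ (E : Set (Ω → F)), β i ≠ 0), ω i)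
      = (S.card : ℝ) * (W - WWt ω (E : Set (Ω → F))) := by
    rw [sum_congr rfl hstep1, sum_const, nsmul_eq_mul]
  -- card of S
  have hcardS : (S.card : ℝ) = (Fintype.card F : ℝ) ^ k - (Fintype.card F : ℝ) ^ (m - 1) := by
    have h1 : ((univ : Finset C).filter (fun v : ↥C => ¬ (v : Ω → F) ∉ E)).card =
        Fintype.card F ^ (m - 1) := by
      have h2 : ((univ : Finset C).filter (fun v : ↥C => ¬ (v : Ω → F) ∉ E)) =
          ((univ : Finset C).filter (fun v : ↥C => (v : Ω → F) ∈ E)) := by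
        refine filter_congr fun v _ => ?_
        simp
      rw [h2, ← Fintype.card_subtype]
      have h3 : Fintype.card {v : C // (v : Ω → F) ∈ E} = Fintype.card E := by
        apply Fintype.card_congr
        exact { toFun := fun x => ⟨(x.1 : Ω → F), x.2⟩
                invFun := fun x => ⟨⟨(x : Ω → F), hE x.2⟩, x.2⟩
                left_inv := fun x => by ext; rfl
                right_inv := fun x => by ext; rfl }
      rw [h3, Module.card_eq_pow_finrank (K := F), hEm]
    have htot := Finset.card_filter_add_card_filter_not
      (s := (univ : Finset C)) (fun v : ↥C => (v : Ω → F) ∉ E)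
    rw [card_univ, Module.card_eq_pow_finrank (K := F) (V := C), hk, h1] at htot
    have hle : Fintype.card F ^ (m - 1) ≤ Fintype.card F ^ k :=
      Nat.pow_le_pow_right (by omega) (by omega)
    have hcard : S.card = Fintype.card F ^ k - Fintype.card F ^ (m - 1) := by
      rw [hS]; omega
    rw [hcard, Nat.cast_sub hle, Nat.cast_pow, Nat.cast_pow]
  -- swap the double sum
  have hswap : ∑ v ∈ S, (∑ i ∈ univ.filter
      (fun i => (v : Ω → F) i ≠ 0 ∧ ¬∃ β ∈ (E : Set (Ω → F)), β i ≠ 0), ω i)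
      = ∑ i ∈ (univ : Finset Ω), ∑ v ∈ S,
        (if (v : Ω → F) i ≠ 0 ∧ ¬∃ β ∈ (E : Set (Ω → F)), β i ≠ 0 then ω i else 0) := by
    rw [Finset.sum_comm]
    exact sum_congr rfl fun v _ => by rw [sum_filter]
  -- evaluate the inner sums
  have hinner : ∀ i : Ω, (∑ v ∈ S,
      (if (v : Ω → F) i ≠ 0 ∧ ¬∃ β ∈ (E : Set (Ω → F)), β i ≠ 0 then ω i else 0))
      = (if (∃ β ∈ (C : Set (Ω → F)), β i ≠ 0) ∧ ¬∃ β ∈ (E : Set (Ω → F)), β i ≠ 0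
          then ((Fintype.card F : ℝ) ^ k - (Fintype.card F : ℝ) ^ (k - 1)) * ω i else 0) := by
    intro i
    by_cases hEi : ∃ β ∈ (E : Set (Ω → F)), β i ≠ 0
    · have hz : ∀ v ∈ S, (if (v : Ω → F) i ≠ 0 ∧
          ¬∃ β ∈ (E : Set (Ω → F)), β i ≠ 0 then ω i else 0) = 0 :=
        fun v _ => if_neg (fun hc => hc.2 hEi)
      rw [sum_congr rfl hz, Finset.sum_const_zero, if_neg (fun hc => hc.2 hEi)]
    · by_cases hCi : ∃ β ∈ (C : Set (Ω → F)), β i ≠ 0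
      · have hfe : S.filter (fun v : ↥C => (v : Ω → F) i ≠ 0)
            = (univ : Finset C).filter (fun v : ↥C => (v : Ω → F) i ≠ 0) := by
          rw [hS, filter_filter]
          refine filter_congr fun v _ => ?_
          constructor
          · tauto
          · intro hvi
            refine ⟨fun hvE => hEi ⟨v, hvE, hvi⟩, hvi⟩
        have hred : ∑ v ∈ S, (if (v : Ω → F) i ≠ 0 ∧
            ¬∃ β ∈ (E : Set (Ω → F)), β i ≠ 0 then ω i else 0)
            = ∑ v ∈ S, (if (v : Ω → F) i ≠ 0 then ω i else 0) :=
          sum_congr rfl fun v _ => if_congr (and_iff_left hEi) rfl rfl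
        rw [hred, ← sum_filter, hfe, sum_const, nsmul_eq_mul,
          card_filter_ne C i hCi, hk]
        have hle : Fintype.card F ^ (k - 1) ≤ Fintype.card F ^ k :=
          Nat.pow_le_pow_right (by omega) (by omega)
        rw [Nat.cast_sub hle, Nat.cast_pow, Nat.cast_pow, if_pos ⟨hCi, hEi⟩]
      · have hz : ∀ v ∈ S, (if (v : Ω → F) i ≠ 0 ∧
            ¬∃ β ∈ (E : Set (Ω → F)), β i ≠ 0 then ω i else 0) = 0 := by
          intro v _
          have hvi : ¬ (v : Ω → F) i ≠ 0 := fun hvi => hCi ⟨v, v.2, hvi⟩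
          exact if_neg (fun hc => hvi hc.1)
        rw [sum_congr rfl hz, Finset.sum_const_zero, if_neg (fun hc => hCi hc.1)]
  -- the difference of set weights
  have hdiff : ∑ i ∈ (univ : Finset Ω),
      (if (∃ β ∈ (C : Set (Ω → F)), β i ≠ 0) ∧ ¬∃ β ∈ (E : Set (Ω → F)), β i ≠ 0
        then ((Fintype.card F : ℝ) ^ k - (Fintype.card F : ℝ) ^ (k - 1)) * ω i else 0)
      = ((Fintype.card F : ℝ) ^ k - (Fintype.card F : ℝ) ^ (k - 1)) *
        (WWt ω (C : Set (Ω → F)) - WWt ω (E : Set (Ω → F))) := by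
    unfold WWt
    rw [sum_filter, sum_filter, ← sum_sub_distrib, mul_sum]
    refine sum_congr rfl fun i _ => ?_
    by_cases hEi : ∃ β ∈ (E : Set (Ω → F)), β i ≠ 0
    · have hCi : ∃ β ∈ (C : Set (Ω → F)), β i ≠ 0 := by
        obtain ⟨β, hβ, hne⟩ := hEi
        exact ⟨β, hE hβ, hne⟩
      rw [if_neg (fun hc => hc.2 hEi), if_pos hCi, if_pos hEi]
      ring
    · by_cases hCi : ∃ β ∈ (C : Set (Ω → F)), β i ≠ 0
      · rw [if_pos ⟨hCi, hEi⟩, if_pos hCi, if_neg hEi]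
        ring
      · rw [if_neg (fun hc => hCi hc.1), if_neg hCi, if_neg hEi]
        ring
  rw [hsum1, hcardS] at hswap
  rw [hswap, sum_congr rfl (fun i _ => hinner i), hdiff]

end Aux

theorem stmt11 {F Ω : Type*} [Field F] [Fintype F] [Fintype Ω] [Nonempty Ω]
    (ω : Ω → ℝ) (hω : ∀ i, 0 < ω i)
    (C : Submodule F (Ω → F)) (k : ℕ) (hk : Module.finrank F C = k) (hk1 : 1 ≤ k)
    (m : ℕ) (hm1 : 1 ≤ m) (hm2 : m ≤ k - 1)
    (h : ∀ D Q : Submodule F (Ω → F), D ≤ C → Q ≤ C →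
      Module.finrank F D = m → Module.finrank F Q = m →
      WWt ω (D : Set (Ω → F)) = WWt ω (Q : Set (Ω → F))) :
    ∀ α ∈ C, ∀ β ∈ C, α ≠ 0 → β ≠ 0 → wwt ω α = wwt ω β := by
  classical
  have hq2 : (1 : ℕ) < Fintype.card F := Fintype.one_lt_card
  have descent : ∀ j : ℕ, j ≤ m - 1 →
      (∀ D Q : Submodule F (Ω → F), D ≤ C → Q ≤ C →
        Module.finrank F D = m - j → Module.finrank F Q = m - j →
        WWt ω (D : Set (Ω → F)) = WWt ω (Q : Set (Ω → F))) := by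
    intro j
    induction j with
    | zero => intro _ D Q hD hQ hfD hfQ; exact h D Q hD hQ (by omega) (by omega)
    | succ n ih =>
      intro hn D Q hD hQ hfD hfQ
      have hP := ih (by omega)
      set m' : ℕ := m - n with hm'
      have hm'1 : 1 ≤ m' := by omega
      have hm'k : m' ≤ k - 1 := by omega
      have hfD' : Module.finrank F D = m' - 1 := by omega
      have hfQ' : Module.finrank F Q = m' - 1 := by omega
      obtain ⟨v, hvC, hvD⟩ := exists_not_mem C D hD (by omega)
      set D₀ : Submodule F (Ω → F) := D ⊔ Submodule.span F {v} with hD₀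
      have hD₀C : D₀ ≤ C := by
        refine sup_le hD ?_
        rw [Submodule.span_le, Set.singleton_subset_iff]
        exact hvC
      have hD₀m : Module.finrank F D₀ = m' := by
        rw [hD₀, finrank_sup_span D v hvD, hfD']
        omega
      set W : ℝ := WWt ω (D₀ : Set (Ω → F)) with hW
      have hWall : ∀ P : Submodule F (Ω → F), P ≤ C → Module.finrank F P = m' →
          WWt ω (P : Set (Ω → F)) = W := fun P hP' hPm => hP P D₀ hP' hD₀C hPm hD₀m
      have keyD := key_identity ω C k hk m' hm'1 hm'k (by omega) W hWall D hD hfD'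
      have keyQ := key_identity ω C k hk m' hm'1 hm'k (by omega) W hWall Q hQ hfQ'
      have hpowlt : (Fintype.card F : ℝ) ^ (m' - 1) < (Fintype.card F : ℝ) ^ (k - 1) := by
        apply pow_lt_pow_right₀
        · exact_mod_cast hq2
        · omega
      have hzero : ((Fintype.card F : ℝ) ^ (k - 1) - (Fintype.card F : ℝ) ^ (m' - 1)) *
          (WWt ω (Q : Set (Ω → F)) - WWt ω (D : Set (Ω → F))) = 0 := by
        linear_combination keyD - keyQ
      rcases mul_eq_zero.mp hzero with hc | hc
      · exact absurd hc (sub_ne_zero.mpr (ne_of_gt hpowlt))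
      · have := sub_eq_zero.mp hc
        exact this.symm
  have h1 : ∀ D Q : Submodule F (Ω → F), D ≤ C → Q ≤ C →
      Module.finrank F D = 1 → Module.finrank F Q = 1 →
      WWt ω (D : Set (Ω → F)) = WWt ω (Q : Set (Ω → F)) := by
    intro D Q hD hQ hfD hfQ
    exact descent (m - 1) (le_refl _) D Q hD hQ (by omega) (by omega)
  intro α hα β hβ hα0 hβ0
  have hspan : ∀ γ : Ω → F, γ ≠ 0 →
      WWt ω ((Submodule.span F {γ} : Submodule F (Ω → F)) : Set (Ω → F)) = wwt ω γ := by
    intro γ hγ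
    unfold WWt wwt
    refine sum_congr ?_ fun _ _ => rfl
    ext i
    simp only [mem_filter, mem_univ, true_and]
    constructor
    · rintro ⟨δ, hδ, hne⟩
      rw [SetLike.mem_coe, Submodule.mem_span_singleton] at hδ
      obtain ⟨c, rfl⟩ := hδ
      intro hγi
      apply hne
      simp [hγi]
    · intro hγi
      exact ⟨γ, Submodule.mem_span_singleton_self γ, hγi⟩
  have hαs : (Submodule.span F {α} : Submodule F (Ω → F)) ≤ C := by
    rw [Submodule.span_le, Set.singleton_subset_iff]; exact hα
  have hβs : (Submodule.span F {β} : Submodule F (Ω → F)) ≤ C := by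
    rw [Submodule.span_le, Set.singleton_subset_iff]; exact hβ
  have := h1 _ _ hαs hβs (finrank_span_singleton hα0) (finrank_span_singleton hβ0)
  rw [hspan α hα0, hspan β hβ0] at this
  exact this
end

section
/- Let F be a finite field with q elements, C ≤ F^Ω a code of dimension k ≥ 1 with generator matrix G ∈ Mat_{k,Ω}(F) (so C = {γG : γ ∈ F^k}), and let τ(i) denote the i-th column of G. Then C is a constant weight code with respect to ω if and only if there exists σ ∈ ℝ such that for every 1-dimensional subspace I of the column space F^k, Σ_{i ∈ χ(C), τ(i) ∈ I} ω(i) = σ. -/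
open scoped Classical
open Finset

/-!
Write `τ i` for the `i`-th column of `G`, so that `(γ G) i = γ ⬝ τ i`, and `S I` for the
`ω`-weight of the nonzero columns lying in a subspace `I`. Two double countings tie codeword
weights to line weights. A nonzero linear form on a finite `F`-space is nonzero on a fraction
`(q - 1) / q` of it, so summing `wt (γ G)` over a hyperplane `v^⊥` counts every column outside
`⟨v⟩` exactly `(q - 1) |v^⊥| / q` times:
`q ∑_{γ ∈ v^⊥} wt (γ G) = (q - 1) |v^⊥| (S ⊤ - S ⟨v⟩)`.
Dually, summing `S ⟨u⟩` over `u ∈ γ^⊥` counts every nonzero column of `γ^⊥` once for each of its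
`q - 1` nonzero multiples, and these are exactly the columns where `γ G` vanishes:
`∑_{u ∈ γ^⊥} S ⟨u⟩ = (q - 1) (S ⊤ - wt (γ G))`.
As `|v^⊥| = q^k / q` for every `v ≠ 0`, constancy of either side forces constancy of the other.
-/

open Matrix Module

section Counting

variable {F V : Type*} [Field F] [Fintype F] [AddCommGroup V] [Module F V] [Fintype V]

theorem LinearMap.card_ker_mul_card {g : V →ₗ[F] F} (hg : g ≠ 0) :
    Fintype.card (LinearMap.ker g) * Fintype.card F = Fintype.card V := by
  simp only [← Nat.card_eq_fintype_card]
  rw [(LinearMap.ker g).card_eq_card_quotient_mul_card,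
    Nat.card_congr (g.quotKerEquivOfSurjective (LinearMap.surjective_of_ne_zero hg)).toEquiv]

theorem LinearMap.card_mul_card_filter_ne_zero {g : V →ₗ[F] F} (hg : g ≠ 0) :
    (Fintype.card F : ℝ) * #{x | g x ≠ 0} = (Fintype.card F - 1) * Fintype.card V := by
  have hsplit : (Fintype.card (LinearMap.ker g) : ℝ) + #{x | g x ≠ 0} = Fintype.card V := by
    have h := card_filter_add_card_filter_not (s := (univ : Finset V)) (fun x => g x = 0)
    rw [card_univ, ← Fintype.card_subtype] at h
    exact_mod_cast h
  have hmul : (Fintype.card (LinearMap.ker g) : ℝ) * Fintype.card F = Fintype.card V := by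
    exact_mod_cast g.card_ker_mul_card hg
  linear_combination (Fintype.card F : ℝ) * hsplit - hmul

theorem card_mul_sum_sum_filter_ne_zero {Ω : Type*} [Fintype Ω] (ω : Ω → ℝ)
    (g : Ω → V →ₗ[F] F) :
    (Fintype.card F : ℝ) * ∑ x, ∑ i ∈ univ.filter (fun i => g i x ≠ 0), ω i
      = (Fintype.card F - 1) * Fintype.card V * ∑ i ∈ univ.filter (fun i => g i ≠ 0), ω i := by
  calc (Fintype.card F : ℝ) * ∑ x, ∑ i ∈ univ.filter (fun i => g i x ≠ 0), ω i
      = ∑ i, (Fintype.card F : ℝ) * #{x | g i x ≠ 0} * ω i := by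
        rw [sum_comm' (t' := univ) (s' := fun i => univ.filter fun x => g i x ≠ 0) (by simp),
          mul_sum]
        simp only [sum_const, nsmul_eq_mul, mul_assoc]
    _ = ∑ i, if g i ≠ 0 then (Fintype.card F - 1) * Fintype.card V * ω i else 0 := by
        refine sum_congr rfl fun i _ => ?_
        split_ifs with hi
        · rw [(g i).card_mul_card_filter_ne_zero hi]
        · simp [not_not.mp hi]
    _ = _ := by rw [← sum_filter, mul_sum]

theorem card_filter_mem_span_singleton {t : V} (ht : t ≠ 0) :
    #{u | t ∈ Submodule.span F {u}} = Fintype.card F - 1 := by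
  have himage : ({u | t ∈ Submodule.span F {u}} : Finset V)
      = ({c | c ≠ 0} : Finset F).image (fun c => c • t) := by
    ext u
    simp only [mem_filter, mem_univ, true_and, mem_image, Submodule.mem_span_singleton]
    constructor
    · rintro ⟨a, rfl⟩
      have ha : a ≠ 0 := by rintro rfl; exact ht (zero_smul F u)
      exact ⟨a⁻¹, inv_ne_zero ha, inv_smul_smul₀ ha u⟩
    · rintro ⟨c, hc, rfl⟩
      exact ⟨c⁻¹, inv_smul_smul₀ hc t⟩
  rw [himage, card_image_of_injective _ (smul_left_injective F ht), filter_ne' univ 0,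
    card_erase_of_mem (mem_univ _), card_univ]

end Counting

theorem Submodule.exists_eq_span_singleton_of_finrank_eq_one {F V : Type*} [Field F]
    [AddCommGroup V] [Module F V] {I : Submodule F V} (hI : finrank F I = 1) :
    ∃ v ≠ 0, I = Submodule.span F {v} := by
  obtain ⟨v, hv, hspan⟩ := finrank_eq_one_iff'.mp hI
  refine ⟨v, by simpa using hv, le_antisymm (fun x hx => ?_) ?_⟩
  · obtain ⟨c, hc⟩ := hspan ⟨x, hx⟩
    exact Submodule.mem_span_singleton.mpr ⟨c, congrArg Subtype.val hc⟩
  · exact (Submodule.span_singleton_le_iff_mem _ _).mpr v.2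

theorem Fintype.sum_eq_card_sub_one_mul {α : Type*} [Fintype α] [DecidableEq α] {f : α → ℝ}
    {a : α} {c : ℝ} (ha : f a = 0) (hf : ∀ x ≠ a, f x = c) :
    ∑ x, f x = (Fintype.card α - 1) * c := by
  rw [← add_sum_erase univ f (mem_univ a), ha, zero_add,
    Finset.sum_congr rfl fun x hx => hf x (ne_of_mem_erase hx), Finset.sum_const,
    card_erase_of_mem (mem_univ a), nsmul_eq_mul,
    Nat.cast_sub (Finset.card_pos.mpr ⟨a, mem_univ a⟩), Finset.card_univ, Nat.cast_one]

theorem forall_ne_zero_eq_iff_exists {α β : Type*} [Zero α] [Nonempty β] {h : α → β} :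
    (∀ a b, a ≠ 0 → b ≠ 0 → h a = h b) ↔ ∃ c, ∀ a ≠ 0, h a = c := by
  constructor
  · intro hconst
    by_cases hα : ∃ a₀ : α, a₀ ≠ 0
    · obtain ⟨a₀, ha₀⟩ := hα
      exact ⟨h a₀, fun a ha => hconst a a₀ ha ha₀⟩
    · push Not at hα
      exact ⟨Classical.arbitrary β, fun a ha => (ha (hα a)).elim⟩
  · rintro ⟨c, hc⟩ a b ha hb
    rw [hc a ha, hc b hb]

section DotProduct

variable {F κ : Type*} [Field F] [Fintype κ]

theorem ker_dotProductEquiv_le_ker_iff {v t : κ → F} :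
    LinearMap.ker (dotProductEquiv F κ v) ≤ LinearMap.ker (dotProductEquiv F κ t)
      ↔ t ∈ Submodule.span F {v} := by
  constructor
  · intro h
    have hspan := mem_span_of_iInf_ker_le_ker (L := fun _ : Unit => dotProductEquiv F κ v)
      (K := dotProductEquiv F κ t) (by simpa using h)
    rw [Set.range_const, Submodule.mem_span_singleton] at hspan
    obtain ⟨c, hc⟩ := hspan
    exact Submodule.mem_span_singleton.mpr ⟨c, (dotProductEquiv F κ).injective (by simpa using hc)⟩
  · rintro ht x hx
    obtain ⟨c, rfl⟩ := Submodule.mem_span_singleton.mp ht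
    simp_all

theorem card_ker_dotProductEquiv [Fintype F] {v : κ → F} (hv : v ≠ 0) :
    (Fintype.card (LinearMap.ker (dotProductEquiv F κ v)) : ℝ)
      = Fintype.card (κ → F) / Fintype.card F := by
  rw [eq_div_iff (by positivity)]
  exact_mod_cast LinearMap.card_ker_mul_card (by simpa using hv)

theorem exists_vecMul_apply_ne_zero_iff {Ω : Type*} (G : Matrix κ Ω F) (i : Ω) :
    (∃ γ, (γ ᵥ* G) i ≠ 0) ↔ Gᵀ i ≠ 0 := by
  have hcoord : ∀ γ, (γ ᵥ* G) i = Gᵀ i ⬝ᵥ γ := fun γ => dotProduct_comm _ _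
  rw [← not_iff_not]
  simp only [not_exists, not_not, hcoord]
  exact dotProduct_eq_zero_iff

theorem vecMul_eq_zero_iff_of_finrank_eq {Ω : Type*} {G : Matrix κ Ω F}
    {C : Submodule F (Ω → F)} (hdim : finrank F C = Fintype.card κ)
    (hG : (C : Set (Ω → F)) = Set.range (· ᵥ* G)) {γ : κ → F} : γ ᵥ* G = 0 ↔ γ = 0 := by
  have hrange : LinearMap.range (vecMulLinear G) = C :=
    SetLike.coe_injective (by rw [LinearMap.coe_range, hG]; rfl)
  have hker := (vecMulLinear G).finrank_range_add_finrank_ker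
  rw [hrange, hdim, finrank_fintype_fun_eq_card, add_eq_left, Submodule.finrank_eq_zero] at hker
  rw [← Submodule.mem_bot F (x := γ), ← hker]
  rfl

end DotProduct

section ColumnWeight

variable {F κ Ω : Type*} [Field F] [Fintype Ω] (ω : Ω → ℝ) (G : Matrix κ Ω F)

/-- The paper's `∑_{i ∈ χ(C), τ i ∈ I} ω i`: the column `τ i` is `Gᵀ i`, and `i ∈ χ(C)` iff
`τ i ≠ 0`. -/
noncomputable def columnWeight (I : Submodule F (κ → F)) : ℝ :=
  ∑ i ∈ univ.filter (fun i => Gᵀ i ≠ 0 ∧ Gᵀ i ∈ I), ω i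

theorem columnWeight_top_sub (I : Submodule F (κ → F)) :
    columnWeight ω G ⊤ - columnWeight ω G I = ∑ i ∈ univ.filter (fun i => Gᵀ i ∉ I), ω i := by
  rw [sub_eq_iff_eq_add', columnWeight, columnWeight,
    ← sum_filter_add_sum_filter_not _ (fun i => Gᵀ i ∈ I), filter_filter, filter_filter]
  congr 2 <;> ext i <;> simp only [mem_filter, mem_univ, true_and, Submodule.mem_top, and_true]
  exact ⟨fun h => h.2, fun h => ⟨fun h0 => h (h0 ▸ I.zero_mem), h⟩⟩

theorem columnWeight_span_zero : columnWeight ω G (Submodule.span F {0}) = 0 := by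
  simp [columnWeight]

variable [Fintype κ]

theorem wwt_vecMul_s12 (γ : κ → F) :
    wwt ω (γ ᵥ* G)
      = columnWeight ω G ⊤ - columnWeight ω G (LinearMap.ker (dotProductEquiv F κ γ)) := by
  rw [columnWeight_top_sub, wwt]
  exact sum_congr (filter_congr fun i _ => Iff.rfl) fun _ _ => rfl

theorem sum_columnWeight_span_singleton [Fintype F] (K : Submodule F (κ → F)) :
    ∑ u : K, columnWeight ω G (Submodule.span F {(u : κ → F)})
      = (Fintype.card F - 1) * columnWeight ω G K := by
  simp only [columnWeight]
  rw [sum_comm' (t' := univ)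
      (s' := fun i => univ.filter fun u : K => Gᵀ i ≠ 0 ∧ Gᵀ i ∈ Submodule.span F {(u : κ → F)})
      (by simp)]
  simp only [sum_const, nsmul_eq_mul]
  rw [mul_sum, sum_filter]
  refine sum_congr rfl fun i _ => ?_
  split_ifs with hi
  · obtain ⟨hi0, hiK⟩ := hi
    have hcount : #{u : K | Gᵀ i ≠ 0 ∧ Gᵀ i ∈ Submodule.span F {(u : κ → F)}}
        = #{u : K | ⟨Gᵀ i, hiK⟩ ∈ Submodule.span F {u}} := by
      congr 1
      ext u
      simp [Submodule.mem_span_singleton, Subtype.ext_iff, hi0]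
    rw [hcount, card_filter_mem_span_singleton (by simpa using hi0),
      Nat.cast_sub Fintype.card_pos, Nat.cast_one, mul_comm]
  · rw [filter_eq_empty_iff.mpr, card_empty, Nat.cast_zero, zero_mul]
    rintro u - ⟨hi0, hspan⟩
    exact hi ⟨hi0, (Submodule.span_singleton_le_iff_mem _ _).mpr u.2 hspan⟩

theorem card_mul_sum_wwt_vecMul [Fintype F] (v : κ → F) :
    (Fintype.card F : ℝ) * ∑ γ : LinearMap.ker (dotProductEquiv F κ v), wwt ω ((γ : κ → F) ᵥ* G)
      = (Fintype.card F - 1) * Fintype.card (LinearMap.ker (dotProductEquiv F κ v))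
        * (columnWeight ω G ⊤ - columnWeight ω G (Submodule.span F {v})) := by
  rw [columnWeight_top_sub]
  convert card_mul_sum_sum_filter_ne_zero ω
    (fun i => (dotProductEquiv F κ (Gᵀ i)).domRestrict (LinearMap.ker (dotProductEquiv F κ v)))
    using 3
  · exact sum_congr (filter_congr fun i _ => by
      rw [LinearMap.domRestrict_apply, dotProductEquiv_apply_apply, dotProduct_comm]; rfl)
      fun _ _ => rfl
  · ext i
    simp only [mem_filter, mem_univ, true_and, ← ker_dotProductEquiv_le_ker_iff,
      LinearMap.le_ker_iff_comp_subtype_eq_zero]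
    rfl

theorem exists_wwt_vecMul_eq_iff_exists_columnWeight_eq [Fintype F] :
    (∃ w, ∀ γ ≠ 0, wwt ω (γ ᵥ* G) = w)
      ↔ ∃ σ, ∀ I : Submodule F (κ → F), finrank F I = 1 → columnWeight ω G I = σ := by
  set q : ℝ := ((Fintype.card F : ℕ) : ℝ) with hq_def
  set N : ℝ := ((Fintype.card (κ → F) : ℕ) : ℝ) / q with hN_def
  have hq : 1 < q := by rw [hq_def]; exact_mod_cast Fintype.one_lt_card
  have hN : 0 < N := by positivity
  constructor
  · rintro ⟨w, hw⟩
    refine ⟨columnWeight ω G ⊤ - q * (N - 1) * w / ((q - 1) * N), fun I hI => ?_⟩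
    obtain ⟨v, hv, rfl⟩ := I.exists_eq_span_singleton_of_finrank_eq_one hI
    have hsum := card_mul_sum_wwt_vecMul ω G v
    rw [Fintype.sum_eq_card_sub_one_mul (a := 0) (c := w) ?_ fun γ hγ => hw _ (by simpa using hγ),
      card_ker_dotProductEquiv hv, ← hq_def, ← hN_def] at hsum
    · rw [eq_sub_iff_add_eq, ← eq_sub_iff_add_eq', div_eq_iff (by positivity)]
      linear_combination hsum
    · simp [wwt]
  · rintro ⟨σ, hσ⟩
    refine ⟨columnWeight ω G ⊤ - (N - 1) * σ / (q - 1), fun γ hγ => ?_⟩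
    have hsum := sum_columnWeight_span_singleton ω G (LinearMap.ker (dotProductEquiv F κ γ))
    rw [Fintype.sum_eq_card_sub_one_mul (a := 0) (c := σ) ?_
      fun u hu => hσ _ (finrank_span_singleton (by simpa using hu)),
      card_ker_dotProductEquiv hγ, ← hq_def, ← hN_def] at hsum
    · rw [wwt_vecMul_s12, sub_right_inj, eq_div_iff (by positivity)]
      linear_combination -hsum
    · exact columnWeight_span_zero ω G

end ColumnWeight

theorem stmt12_general {F Ω : Type*} [Field F] [Fintype F] [Fintype Ω]
    (ω : Ω → ℝ)
    (k : ℕ) (G : Matrix (Fin k) Ω F)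
    (C : Submodule F (Ω → F)) (hdim : Module.finrank F C = k)
    (hG : (C : Set (Ω → F)) = Set.range (fun γ : Fin k → F => Matrix.vecMul γ G)) :
    (∀ α ∈ C, ∀ β ∈ C, α ≠ 0 → β ≠ 0 → wwt ω α = wwt ω β) ↔
      ∃ σ : ℝ, ∀ I : Submodule F (Fin k → F), Module.finrank F I = 1 →
        (∑ i ∈ univ.filter
            (fun i => (∃ β ∈ C, β i ≠ 0) ∧ (fun r => G r i) ∈ I), ω i) = σ := by
  have hC : ∀ α, α ∈ C ↔ ∃ γ, γ ᵥ* G = α := fun α => by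
    rw [← SetLike.mem_coe, hG]
    rfl
  have hsupp : ∀ i, (∃ β ∈ C, β i ≠ 0) ↔ Gᵀ i ≠ 0 := fun i => by
    rw [← exists_vecMul_apply_ne_zero_iff]
    simp [hC]
  have hweight : ∀ I : Submodule F (Fin k → F), (∑ i ∈ univ.filter
      (fun i => (∃ β ∈ C, β i ≠ 0) ∧ (fun r => G r i) ∈ I), ω i) = columnWeight ω G I := fun I =>
    sum_congr (filter_congr fun i _ => by rw [hsupp]; rfl) fun _ _ => rfl
  simp only [hweight]
  rw [← exists_wwt_vecMul_eq_iff_exists_columnWeight_eq, ← forall_ne_zero_eq_iff_exists]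
  simp only [hC, forall_exists_index, forall_apply_eq_imp_iff, ne_eq,
    vecMul_eq_zero_iff_of_finrank_eq (hdim.trans (Fintype.card_fin k).symm) hG]

theorem stmt12 {F Ω : Type*} [Field F] [Fintype F] [Fintype Ω] [Nonempty Ω]
    (q : ℕ) (hq : Fintype.card F = q)
    (ω : Ω → ℝ) (hω : ∀ i, 0 < ω i)
    (k : ℕ) (hk1 : 1 ≤ k) (G : Matrix (Fin k) Ω F)
    (C : Submodule F (Ω → F)) (hdim : Module.finrank F C = k)
    (hG : (C : Set (Ω → F)) = Set.range (fun γ : Fin k → F => Matrix.vecMul γ G)) :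
    (∀ α ∈ C, ∀ β ∈ C, α ≠ 0 → β ≠ 0 → wwt ω α = wwt ω β) ↔
      ∃ σ : ℝ, ∀ I : Submodule F (Fin k → F), Module.finrank F I = 1 →
        (∑ i ∈ univ.filter
            (fun i => (∃ β ∈ C, β i ≠ 0) ∧ (fun r => G r i) ∈ I), ω i) = σ :=
  stmt12_general ω k G C hdim hG
end

section
/- Let F be a finite field, C ≤ F^Ω a code of dimension k with generator matrix G and column map τ. If for all 1-dimensional subspaces I, J ≤ F^{[k]} and all b ∈ ℝ, |{i ∈ χ(C) : τ(i) ∈ I, ω(i) = b}| = |{j ∈ χ(C) : τ(j) ∈ J, ω(j) = b}|, then C is a constant weight code with respect to ω. -/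
open scoped Classical
open Finset

theorem stmt14 {F Ω : Type*} [Field F] [Fintype F] [Fintype Ω] [Nonempty Ω]
    (ω : Ω → ℝ) (hω : ∀ i, 0 < ω i)
    (k : ℕ) (hk1 : 1 ≤ k) (G : Matrix (Fin k) Ω F)
    (C : Submodule F (Ω → F)) (hdim : Module.finrank F C = k)
    (hG : (C : Set (Ω → F)) = Set.range (fun γ : Fin k → F => Matrix.vecMul γ G))
    (h : ∀ I J : Submodule F (Fin k → F),
      Module.finrank F I = 1 → Module.finrank F J = 1 → ∀ b : ℝ,
      (univ.filter
          (fun i => (∃ β ∈ C, β i ≠ 0) ∧ (fun r => G r i) ∈ I ∧ ω i = b)).card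
        = (univ.filter
            (fun j => (∃ β ∈ C, β j ≠ 0) ∧ (fun r => G r j) ∈ J ∧ ω j = b)).card) :
    ∀ α ∈ C, ∀ β ∈ C, α ≠ 0 → β ≠ 0 → wwt ω α = wwt ω β := by
  classical
  set q := Fintype.card F with hq
  have hq2 : 2 ≤ q := Fintype.one_lt_card
  -- χ implies column nonzero
  have hχτ : ∀ i : Ω, (∃ β ∈ C, β i ≠ 0) → (fun r => G r i) ≠ 0 := by
    rintro i ⟨β, hβC, hβi⟩ h0
    have hmem : β ∈ Set.range (fun γ : Fin k → F => Matrix.vecMul γ G) := hG ▸ hβC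
    obtain ⟨δ, rfl⟩ := hmem
    apply hβi
    have hGr : ∀ r, G r i = 0 := fun r => congrFun h0 r
    show Matrix.vecMul δ G i = 0
    simp [Matrix.vecMul, dotProduct, hGr]
  -- The weight of a line (as a function of a spanning vector)
  set W : (Fin k → F) → ℝ := fun v =>
    ∑ i ∈ univ.filter (fun i => (∃ β ∈ C, β i ≠ 0) ∧
        (fun r => G r i) ∈ Submodule.span F {v}), ω i with hWdef
  -- W is constant on nonzero vectors
  have hWconst : ∀ v w : Fin k → F, v ≠ 0 → w ≠ 0 → W v = W w := by
    have key : ∀ u : Fin k → F,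
        W u = ∑ b ∈ univ.image ω, b *
          ((univ.filter (fun i => (∃ β ∈ C, β i ≠ 0) ∧
            (fun r => G r i) ∈ Submodule.span F {u} ∧ ω i = b)).card : ℝ) := by
      intro u
      simp only [hWdef]
      rw [← Finset.sum_fiberwise_of_maps_to (g := ω) (t := univ.image ω)
        (fun i _ => Finset.mem_image_of_mem ω (mem_univ i)) ω]
      apply Finset.sum_congr rfl
      intro b _
      rw [Finset.filter_filter]
      have hset : (univ.filter (fun i => ((∃ β ∈ C, β i ≠ 0) ∧
            (fun r => G r i) ∈ Submodule.span F {u}) ∧ ω i = b))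
          = (univ.filter (fun i => (∃ β ∈ C, β i ≠ 0) ∧
            (fun r => G r i) ∈ Submodule.span F {u} ∧ ω i = b)) := by
        apply Finset.filter_congr; intro i _; simp [and_assoc]
      rw [hset]
      rw [Finset.sum_congr rfl (fun i hi => (Finset.mem_filter.mp hi).2.2.2 : _)]
      rw [Finset.sum_const, nsmul_eq_mul, mul_comm]
    intro v w hv hw
    rw [key v, key w]
    exact Finset.sum_congr rfl (fun b _ => by
      rw [h _ _ (finrank_span_singleton hv) (finrank_span_singleton hw) b])
  -- Main counting identity
  have claim3 : ∀ γ : Fin k → F,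
      ∑ v ∈ univ.filter (fun v : Fin k → F => dotProduct γ v ≠ 0), W v
        = ((q - 1 : ℕ) : ℝ) * wwt ω (Matrix.vecMul γ G) := by
    intro γ
    have hdotcol : ∀ i : Ω, dotProduct γ (fun r => G r i) = Matrix.vecMul γ G i := fun i => rfl
    calc ∑ v ∈ univ.filter (fun v : Fin k → F => dotProduct γ v ≠ 0), W v
        = ∑ v ∈ univ.filter (fun v : Fin k → F => dotProduct γ v ≠ 0),
            ∑ i ∈ (univ : Finset Ω), if ((∃ β ∈ C, β i ≠ 0) ∧
              (fun r => G r i) ∈ Submodule.span F {v}) then ω i else 0 := by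
          apply Finset.sum_congr rfl; intro v _; simp only [hWdef]; rw [Finset.sum_filter]
      _ = ∑ i ∈ (univ : Finset Ω), ∑ v ∈ univ.filter (fun v : Fin k → F => dotProduct γ v ≠ 0),
            if ((∃ β ∈ C, β i ≠ 0) ∧ (fun r => G r i) ∈ Submodule.span F {v}) then ω i else 0 :=
          Finset.sum_comm
      _ = ∑ i ∈ (univ : Finset Ω), if Matrix.vecMul γ G i ≠ 0 then ((q - 1 : ℕ) : ℝ) * ω i else 0 := by
          apply Finset.sum_congr rfl
          intro i _
          rw [← Finset.sum_filter, Finset.filter_filter]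
          by_cases hα : Matrix.vecMul γ G i ≠ 0
          · rw [if_pos hα]
            have hχi : (∃ β ∈ C, β i ≠ 0) := by
              refine ⟨Matrix.vecMul γ G, ?_, hα⟩
              rw [← SetLike.mem_coe, hG]; exact ⟨γ, rfl⟩
            have ht : (fun r => G r i) ≠ 0 := hχτ i hχi
            have hdot : dotProduct γ (fun r => G r i) ≠ 0 := by rw [hdotcol]; exact hα
            have hset : univ.filter (fun v : Fin k → F => dotProduct γ v ≠ 0 ∧
                  ((∃ β ∈ C, β i ≠ 0) ∧ (fun r => G r i) ∈ Submodule.span F {v}))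
                = (univ.filter (fun c : F => c ≠ 0)).image (fun c => c • (fun r => G r i)) := by
              ext v
              simp only [Finset.mem_filter, Finset.mem_image, Finset.mem_univ, true_and]
              constructor
              · rintro ⟨hγv, -, hsp⟩
                obtain ⟨a, ha⟩ := Submodule.mem_span_singleton.mp hsp
                have ha0 : a ≠ 0 := by rintro rfl; simp at ha; exact ht ha.symm
                exact ⟨a⁻¹, inv_ne_zero ha0, by rw [← ha, smul_smul, inv_mul_cancel₀ ha0, one_smul]⟩
              · rintro ⟨c, hc0, rfl⟩
                refine ⟨?_, hχi, Submodule.mem_span_singleton.mpr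
                  ⟨c⁻¹, by rw [smul_smul, inv_mul_cancel₀ hc0, one_smul]⟩⟩
                rw [dotProduct_smul]
                exact smul_ne_zero hc0 hdot
            rw [hset, Finset.sum_image, Finset.sum_const]
            · rw [nsmul_eq_mul]
              congr 1
              rw [Finset.filter_ne', Finset.card_erase_of_mem (mem_univ _), Finset.card_univ]
            · intro c _ d _ hcd
              obtain ⟨r, hr⟩ := Function.ne_iff.mp ht
              have := congrFun hcd r
              simp only [Pi.smul_apply, smul_eq_mul] at this
              exact mul_right_cancel₀ hr this
          · rw [if_neg hα]
            push_neg at hα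
            apply Finset.sum_eq_zero
            intro v hv
            rw [Finset.mem_filter] at hv
            obtain ⟨-, hγv, hχi, hsp⟩ := hv
            exfalso
            have ht : (fun r => G r i) ≠ 0 := hχτ i hχi
            obtain ⟨a, ha⟩ := Submodule.mem_span_singleton.mp hsp
            have ha0 : a ≠ 0 := by rintro rfl; simp at ha; exact ht ha.symm
            have : dotProduct γ (fun r => G r i) = a * dotProduct γ v := by
              rw [← ha, dotProduct_smul]; rfl
            rw [hdotcol, hα] at this
            exact hγv (by
              have := (mul_eq_zero.mp this.symm).resolve_left ha0
              exact this)
      _ = ((q - 1 : ℕ) : ℝ) * wwt ω (Matrix.vecMul γ G) := by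
          rw [wwt, Finset.mul_sum, Finset.sum_filter]
  -- cardinality of {v | γ ⬝ v ≠ 0} does not depend on γ ≠ 0
  have cardA : ∀ γ : Fin k → F, γ ≠ 0 →
      (univ.filter (fun v : Fin k → F => dotProduct γ v ≠ 0)).card * q
        = q ^ k * (q - 1) := by
    intro γ hγ0
    obtain ⟨j, hj⟩ := Function.ne_iff.mp hγ0
    let f : (Fin k → F) →ₗ[F] F :=
      { toFun := fun v => dotProduct γ v
        map_add' := fun x y => by simp [dotProduct_add]
        map_smul' := fun c x => by simp [dotProduct_smul] }
    have hsurj : Function.Surjective f := by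
      intro c
      refine ⟨fun r => if r = j then (γ j)⁻¹ * c else 0, ?_⟩
      show dotProduct γ _ = c
      rw [dotProduct]
      rw [Finset.sum_eq_single j]
      · rw [if_pos rfl, ← mul_assoc, mul_inv_cancel₀ hj, one_mul]
      · intro r _ hr; rw [if_neg hr, mul_zero]
      · intro hj'; exact absurd (mem_univ j) hj'
    have hcard : Nat.card (Fin k → F) = Nat.card (LinearMap.ker f) * Nat.card F := by
      rw [Submodule.card_eq_card_quotient_mul_card (LinearMap.ker f),
        Nat.card_congr (f.quotKerEquivOfSurjective hsurj).toEquiv]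
    have hker : Fintype.card (LinearMap.ker f) * q = q ^ k := by
      have h1 : Nat.card (Fin k → F) = q ^ k := by
        simp [Nat.card_eq_fintype_card, q]
      have h2 : Nat.card F = q := by simp [Nat.card_eq_fintype_card, q]
      rw [h1, h2] at hcard
      rw [← Nat.card_eq_fintype_card]
      omega
    have hfilt : (univ.filter (fun v : Fin k → F => dotProduct γ v = 0)).card
        = Fintype.card (LinearMap.ker f) := by
      rw [← Fintype.card_subtype]
      exact (Fintype.card_congr (Equiv.subtypeEquivRight (fun v => by
        simp [LinearMap.mem_ker, f]))).symm
    have hsplit : (univ.filter (fun v : Fin k → F => dotProduct γ v = 0)).card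
        + (univ.filter (fun v : Fin k → F => dotProduct γ v ≠ 0)).card
        = q ^ k := by
      have h0 := Finset.card_filter_add_card_filter_not
        (s := (univ : Finset (Fin k → F))) (fun v => dotProduct γ v = 0)
      have hcu : (univ : Finset (Fin k → F)).card = q ^ k := by
        simp [Finset.card_univ, q]
      rw [hcu] at h0
      exact h0
    have hqk : 1 ≤ q ^ k := Nat.one_le_pow _ _ (by omega)
    have : (univ.filter (fun v : Fin k → F => dotProduct γ v ≠ 0)).card * q
        = (q ^ k - Fintype.card (LinearMap.ker f)) * q := by
      rw [← hfilt]; congr 1; omega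
    rw [this, Nat.sub_mul, hker, ← pow_succ]
    have : q ^ (k+1) = q ^ k * q := pow_succ q k
    rw [this]
    rw [Nat.mul_sub]
    congr 1
    omega
  -- finish
  intro α hα β hβ hα0 hβ0
  have hαr : α ∈ Set.range (fun γ : Fin k → F => Matrix.vecMul γ G) := hG ▸ hα
  have hβr : β ∈ Set.range (fun γ : Fin k → F => Matrix.vecMul γ G) := hG ▸ hβ
  obtain ⟨γ, rfl⟩ := hαr
  obtain ⟨δ, rfl⟩ := hβr
  have hγ0 : γ ≠ 0 := by rintro rfl; exact hα0 (Matrix.zero_vecMul G)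
  have hδ0 : δ ≠ 0 := by rintro rfl; exact hβ0 (Matrix.zero_vecMul G)
  have hfin : Nonempty (Fin k) := ⟨⟨0, hk1⟩⟩
  set v₀ : Fin k → F := fun _ => 1 with hv₀def
  have hv₀ : v₀ ≠ 0 := by
    intro h0
    have := congrFun h0 ⟨0, hk1⟩
    simp [hv₀def] at this
  have sumW : ∀ ε : Fin k → F, ε ≠ 0 →
      ∑ v ∈ univ.filter (fun v : Fin k → F => dotProduct ε v ≠ 0), W v
        = ((univ.filter (fun v : Fin k → F => dotProduct ε v ≠ 0)).card : ℝ) * W v₀ := by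
    intro ε hε
    rw [Finset.sum_congr rfl (fun v hv => hWconst v v₀ (by
      rintro rfl
      rw [Finset.mem_filter] at hv
      exact hv.2 (dotProduct_zero ε)) hv₀)]
    rw [Finset.sum_const, nsmul_eq_mul]
  have hcards : (univ.filter (fun v : Fin k → F => dotProduct γ v ≠ 0)).card
      = (univ.filter (fun v : Fin k → F => dotProduct δ v ≠ 0)).card := by
    have h1 := cardA γ hγ0
    have h2 := cardA δ hδ0
    have hqpos : 0 < q := by omega
    exact Nat.eq_of_mul_eq_mul_right hqpos (h1.trans h2.symm)
  have e1 := claim3 γ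
  have e2 := claim3 δ
  rw [sumW γ hγ0] at e1
  rw [sumW δ hδ0] at e2
  have hne : ((q - 1 : ℕ) : ℝ) ≠ 0 := by
    simp only [ne_eq, Nat.cast_eq_zero]
    omega
  apply mul_left_cancel₀ hne
  rw [← e1, ← e2, hcards]
end

section
/- Let F be a finite field, C ≤ F^Ω a code of dimension k with generator matrix G and column map τ. If (χ(C), ω) satisfies the unique decomposition property and C is a constant weight code, then for all 1-dimensional subspaces I, J ≤ F^{[k]} and all b ∈ ℝ, |{i ∈ χ(C) : τ(i) ∈ I, ω(i) = b}| = |{j ∈ χ(C) : τ(j) ∈ J, ω(j) = b}|. -/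
open scoped Classical
open Finset

/-!
Write `τ i` for the `i`-th column of `G`, so the codeword of `γ ∈ F^k` has `i`-th entry
`γ ⬝ᵥ τ i`. For `v ≠ 0`, sum the weights of the codewords of all `γ` in the hyperplane `v^⊥`
in two ways. Since `G` has full rank, each `γ ≠ 0` gives the constant weight `w`, so the sum
is `(q^(k-1) - 1) w`. Coordinatewise, `τ i` contributes for exactly `q^(k-1) - q^(k-2)` of
these `γ` when `τ i ∉ ⟨v⟩`, and for none otherwise. Hence for `k ≥ 2` the weight of the
columns outside the line `⟨v⟩`, and so that of the nonzero columns inside it, does not depend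
on `v`; the unique decomposition property turns equal weights into equal counts.
-/

open Module

theorem finrank_span_pair {F V : Type*} [Field F] [AddCommGroup V] [Module F V] {v x : V}
    (hv : v ≠ 0) (hx : x ∉ Submodule.span F {v}) : finrank F (Submodule.span F {v, x}) = 2 := by
  have hli : LinearIndependent F ![v, x] := (LinearIndependent.pair_iff' hv).2 fun a h =>
    hx (h ▸ Submodule.smul_mem _ a (Submodule.mem_span_singleton_self v))
  rw [← Matrix.range_cons_cons_empty v x ![], finrank_span_eq_card hli, Fintype.card_fin]

section Orthogonal

variable {F ι : Type*} [Field F] [Fintype F] [Fintype ι]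

theorem card_filter_forall_dotProduct_eq_zero (s : Set (ι → F)) :
    #{γ : ι → F | ∀ w ∈ s, γ ⬝ᵥ w = 0}
      = Fintype.card F ^ (Fintype.card ι - finrank F (Submodule.span F s)) := by
  set B := Matrix.toBilin' (1 : Matrix ι ι F)
  set W := B.orthogonal (Submodule.span F s)
  have hB : B.Nondegenerate := (Matrix.nondegenerate_of_det_ne_zero (by simp)).toBilin'
  have hmem : ∀ γ, γ ∈ W ↔ ∀ w ∈ s, γ ⬝ᵥ w = 0 := by
    intro γ
    have hdot : ∀ w, w ⬝ᵥ γ = dotProductEquiv F ι γ w := fun w => dotProduct_comm w γ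
    simp only [W, LinearMap.BilinForm.mem_orthogonal_iff, B, Matrix.toBilin'_apply',
      Matrix.one_mulVec, hdot, ← LinearMap.mem_ker]
    exact Submodule.span_le
  calc #{γ : ι → F | ∀ w ∈ s, γ ⬝ᵥ w = 0}
      = Fintype.card W := by
        simp only [← hmem, Fintype.card_subtype]
    _ = _ := by
        rw [card_eq_pow_finrank (K := F), LinearMap.BilinForm.finrank_orthogonal hB,
          finrank_fintype_fun_eq_card]

theorem card_filter_dotProduct_eq_zero_and_ne_zero {v : ι → F} (hv : v ≠ 0)
    (x : ι → F) :
    #{γ : ι → F | γ ⬝ᵥ v = 0 ∧ γ ⬝ᵥ x ≠ 0} = if x ∈ Submodule.span F {v} then 0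
      else Fintype.card F ^ (Fintype.card ι - 1) - Fintype.card F ^ (Fintype.card ι - 2) := by
  split_ifs with hx
  · rw [card_eq_zero, filter_eq_empty_iff]
    obtain ⟨c, rfl⟩ := Submodule.mem_span_singleton.1 hx
    intro γ _ hγ
    simp [dotProduct_smul, hγ.1] at hγ
  · have hline := card_filter_forall_dotProduct_eq_zero (F := F) {v}
    have hplane := card_filter_forall_dotProduct_eq_zero (F := F) {v, x}
    rw [finrank_span_singleton hv] at hline
    rw [finrank_span_pair hv hx] at hplane
    simp only [Set.mem_singleton_iff, forall_eq, Set.mem_insert_iff, forall_eq_or_imp]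
      at hline hplane
    have hsplit := card_filter_add_card_filter_not (s := {γ : ι → F | γ ⬝ᵥ v = 0})
      (p := fun γ => γ ⬝ᵥ x = 0)
    simp only [filter_filter, ← ne_eq] at hsplit
    omega

end Orthogonal

section Weights

variable {F Ω : Type*} [Field F] [Fintype Ω] (ω : Ω → ℝ)

theorem sum_wwt_eq_sum_card_mul_s15 {α : Type*} (S : Finset α) (c : α → Ω → F) :
    ∑ a ∈ S, wwt ω (c a) = ∑ i, (#{a ∈ S | c a i ≠ 0} : ℝ) * ω i := by
  simp only [wwt, sum_filter, card_filter, Nat.cast_sum, Nat.cast_ite, Nat.cast_one,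
    Nat.cast_zero, sum_mul, ite_mul, one_mul, zero_mul]
  exact sum_comm

variable [Fintype F] {ι : Type*} [Fintype ι] (τ : Ω → ι → F)

theorem card_mul_sum_weight_not_mem_span {w : ℝ}
    (hw : ∀ γ ≠ 0, wwt ω (fun i => γ ⬝ᵥ τ i) = w) {v : ι → F} (hv : v ≠ 0) :
    ((Fintype.card F ^ (Fintype.card ι - 1) - Fintype.card F ^ (Fintype.card ι - 2) : ℕ) : ℝ)
        * ∑ i with τ i ∉ Submodule.span F {v}, ω i
      = ((Fintype.card F ^ (Fintype.card ι - 1) - 1 : ℕ) : ℝ) * w := by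
  set S : Finset (ι → F) := {γ | γ ⬝ᵥ v = 0}
  have hS : #S = Fintype.card F ^ (Fintype.card ι - 1) := by
    simpa [finrank_span_singleton hv] using card_filter_forall_dotProduct_eq_zero (F := F) {v}
  have h0 : (0 : ι → F) ∈ S := by simp [S]
  calc _ = ∑ i, (#{γ ∈ S | γ ⬝ᵥ τ i ≠ 0} : ℝ) * ω i := by
        rw [mul_sum, sum_filter]
        refine sum_congr rfl fun i _ => ?_
        rw [filter_filter, card_filter_dotProduct_eq_zero_and_ne_zero hv]
        split_ifs <;> simp
    _ = ∑ γ ∈ S, wwt ω (fun i => γ ⬝ᵥ τ i) := (sum_wwt_eq_sum_card_mul_s15 ω S _).symm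
    _ = ∑ γ ∈ S.erase 0, w := by
        rw [← add_sum_erase S _ h0]
        have hw0 : wwt ω (fun _ => (0 : F)) = 0 := by simp [wwt]
        simp only [zero_dotProduct, hw0, zero_add]
        exact sum_congr rfl fun γ hγ => hw γ (ne_of_mem_erase hγ)
    _ = _ := by rw [sum_const, card_erase_of_mem h0, hS, nsmul_eq_mul]

theorem sum_weight_mem_span_singleton_eq (hn : 2 ≤ Fintype.card ι)
    (hconst : ∀ γ γ' : ι → F, γ ≠ 0 → γ' ≠ 0 →
      wwt ω (fun i => γ ⬝ᵥ τ i) = wwt ω (fun i => γ' ⬝ᵥ τ i))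
    {v u : ι → F} (hv : v ≠ 0) (hu : u ≠ 0) :
    ∑ i with τ i ≠ 0 ∧ τ i ∈ Submodule.span F {v}, ω i
      = ∑ i with τ i ≠ 0 ∧ τ i ∈ Submodule.span F {u}, ω i := by
  have hw : ∀ γ ≠ 0, wwt ω (fun i => γ ⬝ᵥ τ i) = wwt ω (fun i => v ⬝ᵥ τ i) :=
    fun γ hγ => hconst γ v hγ hv
  have hc : ((Fintype.card F ^ (Fintype.card ι - 1) - Fintype.card F ^ (Fintype.card ι - 2) : ℕ)
      : ℝ) ≠ 0 := by
    have hlt := Nat.pow_lt_pow_right (Fintype.one_lt_card (α := F))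
      (by omega : Fintype.card ι - 2 < Fintype.card ι - 1)
    exact_mod_cast (Nat.sub_pos_of_lt hlt).ne'
  have hcompl : ∑ i with τ i ∉ Submodule.span F {v}, ω i
      = ∑ i with τ i ∉ Submodule.span F {u}, ω i :=
    mul_left_cancel₀ hc ((card_mul_sum_weight_not_mem_span ω τ hw hv).trans
      (card_mul_sum_weight_not_mem_span ω τ hw hu).symm)
  have hsplit : ∀ x : ι → F, ∑ i with τ i ≠ 0 ∧ τ i ∈ Submodule.span F {x}, ω i
      + ∑ i with τ i ∉ Submodule.span F {x}, ω i = ∑ i with τ i ≠ 0, ω i := by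
    intro x
    rw [← sum_filter_add_sum_filter_not {i | τ i ≠ 0} (fun i => τ i ∈ Submodule.span F {x}),
      filter_filter, filter_filter]
    congr 2
    ext i
    simp only [mem_filter, mem_univ, true_and, iff_and_self]
    rintro hi h0
    exact hi (h0 ▸ Submodule.zero_mem _)
  linarith [hsplit v, hsplit u]

end Weights

theorem LinearMap.injective_of_finrank_range_eq {K V W : Type*} [Field K] [AddCommGroup V]
    [Module K V] [FiniteDimensional K V] [AddCommGroup W] [Module K W] {f : V →ₗ[K] W}
    (hf : finrank K (range f) = finrank K V) : Function.Injective f := by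
  rw [← injective_rangeRestrict_iff,
    injective_iff_surjective_of_finrank_eq_finrank hf.symm]
  exact surjective_rangeRestrict f

theorem exists_dotProduct_ne_zero_iff {R ι : Type*} [CommSemiring R] [Fintype ι] {x : ι → R} :
    (∃ γ : ι → R, γ ⬝ᵥ x ≠ 0) ↔ x ≠ 0 := by
  simpa [dotProduct_comm] using (dotProduct_eq_zero_iff (v := x)).not

theorem Submodule.eq_of_finrank_eq_one_of_finrank_le_one {K V : Type*} [Field K]
    [AddCommGroup V] [Module K V] [FiniteDimensional K V] (hV : finrank K V ≤ 1)
    {I J : Submodule K V} (hI : finrank K I = 1) (hJ : finrank K J = 1) : I = J := by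
  have hV1 : finrank K V = 1 := le_antisymm hV (hI ▸ I.finrank_le)
  rw [eq_top_of_finrank_eq (hI.trans hV1.symm), eq_top_of_finrank_eq (hJ.trans hV1.symm)]

theorem stmt15_general {F Ω : Type*} [Field F] [Fintype F] [Fintype Ω]
    (ω : Ω → ℝ) (k : ℕ) (G : Matrix (Fin k) Ω F)
    (C : Submodule F (Ω → F)) (hdim : Module.finrank F C = k)
    (hG : (C : Set (Ω → F)) = Set.range (fun γ : Fin k → F => Matrix.vecMul γ G))
    (hUDP : ∀ I J : Finset Ω,
      (∀ i ∈ I, ∃ β ∈ C, β i ≠ 0) → (∀ j ∈ J, ∃ β ∈ C, β j ≠ 0) →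
      (∑ i ∈ I, ω i) = (∑ j ∈ J, ω j) →
      ∀ b : ℝ, (I.filter (fun i => ω i = b)).card = (J.filter (fun j => ω j = b)).card)
    (hconst : ∀ α ∈ C, ∀ β ∈ C, α ≠ 0 → β ≠ 0 → wwt ω α = wwt ω β) :
    ∀ I J : Submodule F (Fin k → F),
      Module.finrank F I = 1 → Module.finrank F J = 1 → ∀ b : ℝ,
      (univ.filter
          (fun i => (∃ β ∈ C, β i ≠ 0) ∧ (fun r => G r i) ∈ I ∧ ω i = b)).card
        = (univ.filter
            (fun j => (∃ β ∈ C, β j ≠ 0) ∧ (fun r => G r j) ∈ J ∧ ω j = b)).card := by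
  intro I J hI hJ b
  rcases lt_or_ge k 2 with hk | hk
  · rw [Submodule.eq_of_finrank_eq_one_of_finrank_le_one (by simp; omega) hI hJ]
  have hrange : LinearMap.range G.vecMulLinear = C := by
    ext β
    rw [LinearMap.mem_range, ← SetLike.mem_coe, hG]
    rfl
  have hinj : Function.Injective G.vecMulLinear :=
    LinearMap.injective_of_finrank_range_eq (by rw [hrange, hdim, finrank_fin_fun])
  have hχ : ∀ i, (∃ β ∈ C, β i ≠ 0) ↔ (fun r => G r i) ≠ 0 := by
    intro i
    rw [← exists_dotProduct_ne_zero_iff, ← hrange]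
    simp [Matrix.vecMul]
  obtain ⟨v, hv, rfl⟩ := (atom_iff_nonzero_span I).1 (Submodule.isAtom_iff_finrank_eq_one.2 hI)
  obtain ⟨u, hu, rfl⟩ := (atom_iff_nonzero_span J).1 (Submodule.isAtom_iff_finrank_eq_one.2 hJ)
  have hsum := sum_weight_mem_span_singleton_eq ω (fun i r => G r i) (by simpa using hk)
    (fun γ γ' hγ hγ' => hconst _ (hrange ▸ LinearMap.mem_range_self _ γ) _
      (hrange ▸ LinearMap.mem_range_self _ γ')
      ((map_ne_zero_iff _ hinj).2 hγ) ((map_ne_zero_iff _ hinj).2 hγ')) hv hu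
  convert hUDP _ _ (fun i hi => (hχ i).2 (mem_filter.1 hi).2.1)
    (fun i hi => (hχ i).2 (mem_filter.1 hi).2.1) hsum b using 2 <;>
    ext i <;> simp [hχ, and_assoc]

theorem stmt15 {F Ω : Type*} [Field F] [Fintype F] [Fintype Ω] [Nonempty Ω]
    (ω : Ω → ℝ) (hω : ∀ i, 0 < ω i)
    (k : ℕ) (hk1 : 1 ≤ k) (G : Matrix (Fin k) Ω F)
    (C : Submodule F (Ω → F)) (hdim : Module.finrank F C = k)
    (hG : (C : Set (Ω → F)) = Set.range (fun γ : Fin k → F => Matrix.vecMul γ G))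
    (hUDP : ∀ I J : Finset Ω,
      (∀ i ∈ I, ∃ β ∈ C, β i ≠ 0) → (∀ j ∈ J, ∃ β ∈ C, β j ≠ 0) →
      (∑ i ∈ I, ω i) = (∑ j ∈ J, ω j) →
      ∀ b : ℝ, (I.filter (fun i => ω i = b)).card = (J.filter (fun j => ω j = b)).card)
    (hconst : ∀ α ∈ C, ∀ β ∈ C, α ≠ 0 → β ≠ 0 → wwt ω α = wwt ω β) :
    ∀ I J : Submodule F (Fin k → F),
      Module.finrank F I = 1 → Module.finrank F J = 1 → ∀ b : ℝ,
      (univ.filter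
          (fun i => (∃ β ∈ C, β i ≠ 0) ∧ (fun r => G r i) ∈ I ∧ ω i = b)).card
        = (univ.filter
            (fun j => (∃ β ∈ C, β j ≠ 0) ∧ (fun r => G r j) ∈ J ∧ ω j = b)).card :=
  stmt15_general ω k G C hdim hG hUDP hconst
end

section
/- Let F be a finite field, Ω finite, and ω : Ω → ℝ⁺ the constant function 1 (so ω-weight is the Hamming weight). Then F^Ω satisfies the MacWilliams extension property: every Hamming-weight-preserving F-linear map from a subspace C ≤ F^Ω into F^Ω extends to a Hamming weight isometry of F^Ω. -/
open scoped Classical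
open Finset

/-!
Consider the functionals `λᵢ(α) = α i` and `μᵢ(α) = f α i` on `C`.
The hypothesis says that at every `α ∈ C` equally many `λᵢ` and `μᵢ` vanish. Against a
nontrivial additive character `ψ` of `F`, `∑ᵢ ∑_{u ∈ Fˣ} ψ (u • νᵢ α)` depends only on that
number, so the functions `α ↦ ψ (g α)`, `g ∈ C*`, which are linearly independent, occur with
the same multiplicities for `ν = λ` and `ν = μ`: the multisets `{u • λᵢ}` and `{u • μᵢ}`
coincide. Hence both families meet every `Fˣ`-orbit equally often, which yields a permutation
`e` and units `uᵢ` with `μᵢ = uᵢ • λ_{e i}`; the monomial map `β ↦ (uᵢ β_{e i})ᵢ` extends `f`.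
-/

open MulAction

section GroupAction

variable (G : Type*) {X ι : Type*} [Group G] [MulAction G X] [Fintype G] [Fintype ι]

noncomputable def smulCount (ν : ι → X) (x : X) : ℕ := #{p : ι × G | p.2 • ν p.1 = x}

variable {G}

lemma card_smul_eq_of_mem_orbit {x y : X} (h : y ∈ orbit G x) :
    #{g : G | g • x = y} = Nat.card (stabilizer G y) := by
  obtain ⟨g₀, rfl⟩ := h
  calc #{g : G | g • x = g₀ • x} = #{g : G | g • g₀ • x = g₀ • x} :=
        card_equiv (Equiv.mulRight g₀⁻¹) fun g => by simp [mul_smul]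
    _ = Nat.card (stabilizer G (g₀ • x)) := by
        rw [← Fintype.card_subtype, ← Nat.card_eq_fintype_card]; rfl

lemma smulCount_eq_card_stabilizer_mul (ν : ι → X) (x : X) :
    smulCount G ν x =
      Nat.card (stabilizer G x) * #{i | (⟦ν i⟧ : orbitRel.Quotient G X) = ⟦x⟧} := by
  have hfiber : ∀ i, #{g : G | g • ν i = x} =
      if (⟦ν i⟧ : orbitRel.Quotient G X) = ⟦x⟧ then Nat.card (stabilizer G x) else 0 := by
    intro i
    split_ifs with h
    · exact card_smul_eq_of_mem_orbit (mem_orbit_symm.1 (Quotient.eq.1 h))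
    · refine card_eq_zero.2 (filter_eq_empty_iff.2 fun g _ hg => h (Quotient.eq.2 ?_))
      exact mem_orbit_symm.1 ⟨g, hg⟩
  rw [smulCount, card_filter, Fintype.sum_prod_type]
  simp_rw [← card_filter, hfiber]
  rw [sum_ite, sum_const_zero, add_zero, sum_const, smul_eq_mul, mul_comm]

lemma exists_equiv_mem_orbit_of_smulCount_eq {ν₁ ν₂ : ι → X}
    (h : smulCount G ν₁ = smulCount G ν₂) : ∃ e : ι ≃ ι, ∀ i, ν₂ i ∈ orbit G (ν₁ (e i)) := by
  have hfiber : ∀ c : orbitRel.Quotient G X, #{i | ⟦ν₂ i⟧ = c} = #{i | ⟦ν₁ i⟧ = c} := by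
    refine Quotient.ind fun x => ?_
    have hx := congrFun h x
    rw [smulCount_eq_card_stabilizer_mul, smulCount_eq_card_stabilizer_mul] at hx
    exact (Nat.eq_of_mul_eq_mul_left Nat.card_pos hx).symm
  let e (c : orbitRel.Quotient G X) : {i // ⟦ν₂ i⟧ = c} ≃ {i // ⟦ν₁ i⟧ = c} :=
    Fintype.equivOfCardEq <| by rw [Fintype.card_subtype, Fintype.card_subtype, hfiber c]
  exact ⟨Equiv.ofFiberEquiv e, fun i => Quotient.exact (Equiv.ofFiberEquiv_map e i).symm⟩

end GroupAction

section Characters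

variable {F V ι R : Type*} [Field F] [AddCommGroup V] [Module F V]

lemma AddChar.sum_units_mul [Fintype F] [CommRing R] [IsDomain R] {ψ : AddChar F R}
    (hψ : ψ ≠ 1) (x : F) :
    ∑ u : Fˣ, ψ (u * x) = Fintype.card F - 1 - Fintype.card F * (if x ≠ 0 then 1 else 0) := by
  have hsplit := Fintype.sum_eq_add_sum_subtype_ne (fun c : F => ψ (c * x)) 0
  rw [AddChar.sum_mulShift x (AddChar.IsPrimitive.of_ne_one hψ), zero_mul,
    AddChar.map_zero_eq_one, ← Fintype.sum_equiv unitsEquivNeZero (fun u : Fˣ => ψ (u * x)) _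
      fun _ => rfl] at hsplit
  rw [eq_sub_of_add_eq' hsplit.symm]
  by_cases hx : x = 0 <;> simp [hx]

lemma AddChar.injective_comp_dual [Monoid R] {ψ : AddChar F R} (hψ : ψ ≠ 1) :
    Function.Injective fun g : Module.Dual F V => ψ.compAddMonoidHom g.toAddMonoidHom := by
  intro g₁ g₂ hg
  by_contra hne
  have hsurj : Function.Surjective (g₁ - g₂) :=
    LinearMap.surjective_of_ne_zero (sub_ne_zero.2 hne)
  refine hψ (DFunLike.ext _ _ fun x => ?_)
  obtain ⟨v, rfl⟩ := hsurj x
  rw [AddChar.one_apply]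
  have hv : ψ (g₁ v) = ψ (g₂ v) := DFunLike.congr_fun hg v
  have : ψ ((g₁ - g₂) v) * ψ (g₂ v) = 1 * ψ (g₂ v) := by
    rw [one_mul, ← AddChar.map_add_eq_mul, LinearMap.sub_apply, sub_add_cancel, hv]
  exact (ψ.val_isUnit _).mul_right_cancel this

lemma sum_smulCount_mul_addChar [Fintype F] [Fintype ι] [Fintype (Module.Dual F V)]
    [CommRing R] [IsDomain R] {ψ : AddChar F R} (hψ : ψ ≠ 1) (ν : ι → Module.Dual F V) (v : V) :
    ∑ g, (smulCount Fˣ ν g : R) * ψ (g v) =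
      Fintype.card ι * (Fintype.card F - 1) - Fintype.card F * #{i | ν i v ≠ 0} := by
  calc ∑ g, (smulCount Fˣ ν g : R) * ψ (g v)
      = ∑ p : ι × Fˣ, ψ ((p.2 • ν p.1) v) := by
        rw [← sum_fiberwise univ fun p : ι × Fˣ => p.2 • ν p.1]
        refine sum_congr rfl fun g _ => ?_
        rw [smulCount, sum_congr rfl fun p hp => by rw [(mem_filter.1 hp).2], sum_const,
          nsmul_eq_mul]
    _ = ∑ i, ∑ u : Fˣ, ψ (u * ν i v) := Fintype.sum_prod_type _
    _ = ∑ i, (Fintype.card F - 1 - Fintype.card F * (if ν i v ≠ 0 then 1 else 0) : R) := by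
        simp_rw [AddChar.sum_units_mul hψ]
    _ = Fintype.card ι * (Fintype.card F - 1) - Fintype.card F * #{i | ν i v ≠ 0} := by
        rw [sum_sub_distrib, ← mul_sum, sum_boole, sum_const, card_univ, nsmul_eq_mul]

end Characters

section Functionals

variable {F V ι : Type*} [Field F] [Fintype F] [AddCommGroup V] [Module F V] [Finite V]
  [Fintype ι]

lemma smulCount_units_eq_of_card_ne_zero_eq {ν₁ ν₂ : ι → Module.Dual F V}
    (h : ∀ v, #{i | ν₁ i v ≠ 0} = #{i | ν₂ i v ≠ 0}) : smulCount Fˣ ν₁ = smulCount Fˣ ν₂ := by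
  have : Finite (Module.Dual F V) := Finite.of_injective _ DFunLike.coe_injective
  have : Fintype (Module.Dual F V) := Fintype.ofFinite _
  obtain ⟨ψ, hψ⟩ : ∃ ψ : AddChar F ℂ, ψ 1 ≠ 1 := AddChar.exists_apply_ne_zero.2 one_ne_zero
  have hψ1 : ψ ≠ 1 := by rintro rfl; exact hψ (AddChar.one_apply 1)
  have hli : LinearIndependent ℂ fun g : Module.Dual F V =>
      ⇑(ψ.compAddMonoidHom g.toAddMonoidHom) :=
    (AddChar.linearIndependent V ℂ).comp _ (AddChar.injective_comp_dual hψ1)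
  have hcomb : ∑ g, ((smulCount Fˣ ν₁ g : ℂ) - smulCount Fˣ ν₂ g) •
      ⇑(ψ.compAddMonoidHom g.toAddMonoidHom) = 0 := by
    funext v
    simp only [Finset.sum_apply, Pi.smul_apply, smul_eq_mul, sub_mul, sum_sub_distrib,
      AddChar.compAddMonoidHom_apply, LinearMap.toAddMonoidHom_coe,
      sum_smulCount_mul_addChar hψ1, h v, sub_self, Pi.zero_apply]
  funext g
  exact_mod_cast sub_eq_zero.1 (Fintype.linearIndependent_iff.1 hli _ hcomb g)

theorem Module.Dual.exists_equiv_units_smul_eq_of_card_ne_zero_eq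
    {ν₁ ν₂ : ι → Module.Dual F V} (h : ∀ v, #{i | ν₁ i v ≠ 0} = #{i | ν₂ i v ≠ 0}) :
    ∃ (e : ι ≃ ι) (u : ι → Fˣ), ∀ i, u i • ν₁ (e i) = ν₂ i := by
  obtain ⟨e, he⟩ :=
    exists_equiv_mem_orbit_of_smulCount_eq (smulCount_units_eq_of_card_ne_zero_eq h)
  choose u hu using fun i => mem_orbit_iff.1 (he i)
  exact ⟨e, u, hu⟩

end Functionals

section Monomial

variable {R ι ι' : Type*} [CommSemiring R]

def monomialEquiv (e : ι ≃ ι') (u : ι → Rˣ) : (ι' → R) ≃ₗ[R] (ι → R) :=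
  (LinearEquiv.funCongrLeft R R e).trans
    (LinearEquiv.piCongrRight fun i => LinearEquiv.smulOfUnit (u i))

lemma monomialEquiv_apply (e : ι ≃ ι') (u : ι → Rˣ) (β : ι' → R) (i : ι) :
    monomialEquiv e u β i = u i • β (e i) := rfl

lemma card_monomialEquiv_ne_zero [Fintype ι] [Fintype ι'] (e : ι ≃ ι') (u : ι → Rˣ)
    (β : ι' → R) : #{i | monomialEquiv e u β i ≠ 0} = #{j | β j ≠ 0} :=
  card_equiv e fun i => by
    simp only [mem_filter, mem_univ, true_and]
    rw [monomialEquiv_apply, ne_eq, smul_eq_zero_iff_eq]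

end Monomial

theorem stmt19_general {F Ω : Type*} [Field F] [Fintype F] [Fintype Ω] :
    ∀ (C : Submodule F (Ω → F)) (f : C →ₗ[F] (Ω → F)),
      (∀ α : C,
        (univ.filter (fun i => f α i ≠ 0)).card
          = (univ.filter (fun i => (α : Ω → F) i ≠ 0)).card) →
      ∃ φ : (Ω → F) ≃ₗ[F] (Ω → F),
        (∀ β : Ω → F,
          (univ.filter (fun i => φ β i ≠ 0)).card
            = (univ.filter (fun i => β i ≠ 0)).card) ∧
        ∀ α : C, φ (α : Ω → F) = f α := by
  intro C f hwt
  obtain ⟨e, u, hu⟩ := Module.Dual.exists_equiv_units_smul_eq_of_card_ne_zero_eq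
    (ν₁ := fun i => (LinearMap.proj i).comp C.subtype) (ν₂ := fun i => (LinearMap.proj i).comp f)
    fun α => (hwt α).symm
  exact ⟨monomialEquiv e u, card_monomialEquiv_ne_zero e u,
    fun α => funext fun i => LinearMap.congr_fun (hu i) α⟩

theorem stmt19 {F Ω : Type*} [Field F] [Fintype F] [Fintype Ω] [Nonempty Ω] :
    ∀ (C : Submodule F (Ω → F)) (f : C →ₗ[F] (Ω → F)),
      (∀ α : C,
        (univ.filter (fun i => f α i ≠ 0)).card
          = (univ.filter (fun i => (α : Ω → F) i ≠ 0)).card) →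
      ∃ φ : (Ω → F) ≃ₗ[F] (Ω → F),
        (∀ β : Ω → F,
          (univ.filter (fun i => φ β i ≠ 0)).card
            = (univ.filter (fun i => β i ≠ 0)).card) ∧
        ∀ α : C, φ (α : Ω → F) = f α :=
  stmt19_general
end
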